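/- arXiv:2108.03450 — 10 statements merged into one kernel-verified Lean document; each statement's English description precedes it below -/
import Mathlib

section
/- Let μ and ν be Borel probability measures on ℝ with finite first moments such that every point of the topological support of ν is less than or equal to every point of the topological support of μ, and such that μ({ℓ})·ν({ℓ}) = 0 where ℓ = inf(supp μ). Let G_μ and G_ν denote the left-continuous quantile functions of μ and ν respectively, and define T : (0,1) → ℝ by T(u) = G_ν(1−u). Then T is non-increasing, T is right-continuous, T(u) < G_μ(u) for all u ∈ (0,1), and the pushforward of the Lebesgue measure on (0,1) under the map u ↦ (G_μ(u), T(u)) is a supermartingale coupling of μ and ν. -/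
open MeasureTheory Set Filter

noncomputable section

/-- `η ∈ 𝓜`: a finite Borel measure on ℝ with finite first moment. -/
def MemM (η : MeasureTheory.Measure ℝ) : Prop :=
  MeasureTheory.IsFiniteMeasure η ∧ MeasureTheory.Integrable (fun x : ℝ => x) η

/-- Convex-decreasing order `≤_cd`. -/
def LeCD (η χ : MeasureTheory.Measure ℝ) : Prop :=
  ∀ f : ℝ → ℝ, ConvexOn ℝ Set.univ f → Antitone f →
    MeasureTheory.Integrable f η → MeasureTheory.Integrable f χ →
    ∫ x, f x ∂η ≤ ∫ x, f x ∂χ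

/-- Positive convex-decreasing order `≤_pcd`. -/
def LePCD (η χ : MeasureTheory.Measure ℝ) : Prop :=
  ∀ f : ℝ → ℝ, (∀ x, 0 ≤ f x) → ConvexOn ℝ Set.univ f → Antitone f →
    MeasureTheory.Integrable f η → MeasureTheory.Integrable f χ →
    ∫ x, f x ∂η ≤ ∫ x, f x ∂χ

/-- Positive convex order `≤_pc`. -/
def LePC (η χ : MeasureTheory.Measure ℝ) : Prop :=
  ∀ f : ℝ → ℝ, (∀ x, 0 ≤ f x) → ConvexOn ℝ Set.univ f →
    MeasureTheory.Integrable f η → MeasureTheory.Integrable f χ →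
    ∫ x, f x ∂η ≤ ∫ x, f x ∂χ

/-- A supermartingale coupling of `η` and `χ`. -/
def IsSupermartingaleCoupling (η χ : MeasureTheory.Measure ℝ)
    (π : MeasureTheory.Measure (ℝ × ℝ)) : Prop :=
  MeasureTheory.IsProbabilityMeasure π ∧
  π.map Prod.fst = η ∧ π.map Prod.snd = χ ∧
  MeasureTheory.Integrable (fun p : ℝ × ℝ => p.2) π ∧
  ∀ B : Set ℝ, MeasurableSet B →
    ∫ p in B ×ˢ (Set.univ : Set ℝ), (p : ℝ × ℝ).2 ∂π ≤ ∫ x in B, x ∂η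

/-- The potential function `P_η(k) = ∫ (k-x)⁺ η(dx)`. -/
def Ppot (η : MeasureTheory.Measure ℝ) (k : ℝ) : ℝ := ∫ x, max (k - x) 0 ∂η

/-- The potential function `C_η(k) = ∫ (x-k)⁺ η(dx)`. -/
def Cpot (η : MeasureTheory.Measure ℝ) (k : ℝ) : ℝ := ∫ x, max (x - k) 0 ∂η

/-- The left-continuous quantile function `G_η(u) = sup {k | η((-∞,k]) < u}`. -/
def quantile (η : MeasureTheory.Measure ℝ) (u : ℝ) : ℝ :=
  sSup {k : ℝ | (η (Set.Iic k)).toReal < u}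

/-- The lift `μ_u = μ|_{(-∞,G(u))} + (u - μ((-∞,G(u)))) δ_{G(u)}`, with `μ_0 = 0`, `μ_1 = μ`. -/
def muU (μ : MeasureTheory.Measure ℝ) (u : ℝ) : MeasureTheory.Measure ℝ :=
  if u ≤ 0 then 0
  else if 1 ≤ u then μ
  else μ.restrict (Set.Iio (quantile μ u)) +
    (ENNReal.ofReal (u - (μ (Set.Iio (quantile μ u))).toReal)) •
      MeasureTheory.Measure.dirac (quantile μ u)

/-- `S` is a shadow of `μ` in `ν`. -/
def IsShadow (μ ν S : MeasureTheory.Measure ℝ) : Prop :=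
  MemM S ∧ LeCD μ S ∧ (∀ A : Set ℝ, MeasurableSet A → S A ≤ ν A) ∧
  ∀ η : MeasureTheory.Measure ℝ, MemM η → LeCD μ η →
    (∀ A : Set ℝ, MeasurableSet A → η A ≤ ν A) → LeCD S η

/-- `h` is the convex hull of `f`. -/
def IsConvexHullFn (f h : ℝ → ℝ) : Prop :=
  ConvexOn ℝ Set.univ h ∧ (∀ x, h x ≤ f x) ∧
  ∀ g : ℝ → ℝ, ConvexOn ℝ Set.univ g → (∀ x, g x ≤ f x) → ∀ x, g x ≤ h x

/-- The class `𝒟(a,b)`. -/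
def MemD (a b : ℝ) (f : ℝ → ℝ) : Prop :=
  (∀ x, 0 ≤ f x) ∧ Monotone f ∧ ConvexOn ℝ Set.univ f ∧
  Filter.Tendsto f Filter.atBot (nhds 0) ∧
  Filter.Tendsto (fun z => f z - (a * z - b)) Filter.atTop (nhds 0)

/-- The topological support of a measure. -/
def msupport (η : MeasureTheory.Measure ℝ) : Set ℝ :=
  {x : ℝ | ∀ U ∈ nhds x, η U ≠ 0}

/-! On `(0, 1)` the quantile function is the generalised inverse of the distribution
function, `G_η(u) ≤ x ↔ u ≤ F_η(x)`. Hence both `G_μ` and `T(u) = G_ν(1 - u)` push Lebesgue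
measure on `(0, 1)` forward to their laws. The support condition puts all of `ν` on `(-∞, ℓ]`
and all of `μ` on `[ℓ, ∞)`, so `T ≤ ℓ ≤ G_μ`, and the atom condition makes one of the two
inequalities strict. A coupling `(X, Y)` with `Y ≤ X` is a supermartingale coupling, since
`E[Y; X ∈ B] ≤ E[X; X ∈ B]`. -/

lemma msupport_eq_support (η : Measure ℝ) : msupport η = η.support := by
  ext x
  simp [msupport, Measure.mem_support_iff_forall, pos_iff_ne_zero]

section Support

variable {X : Type*} [TopologicalSpace X] [HereditarilyLindelofSpace X] [MeasurableSpace X]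
  [Preorder X] {μ : Measure X} {a : X}

lemma measure_Ioi_eq_zero_of_support_le (h : ∀ x ∈ μ.support, x ≤ a) : μ (Ioi a) = 0 :=
  measure_mono_null (fun x hx hxμ => hx.not_ge (h x hxμ)) Measure.measure_compl_support

lemma measure_Iio_eq_zero_of_le_support (h : ∀ x ∈ μ.support, a ≤ x) : μ (Iio a) = 0 :=
  measure_mono_null (fun x hx hxμ => hx.not_ge (h x hxμ)) Measure.measure_compl_support

end Support

lemma one_sub_mem_Ioo {u : ℝ} (hu : u ∈ Ioo 0 1) : 1 - u ∈ Ioo 0 1 :=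
  ⟨sub_pos.2 hu.2, sub_lt_self 1 hu.1⟩

instance isProbabilityMeasure_volume_restrict_Ioo :
    IsProbabilityMeasure (volume.restrict (Ioo (0 : ℝ) 1)) :=
  ⟨by simp [Real.volume_Ioo]⟩

lemma measurePreserving_one_sub_restrict_Ioo :
    MeasurePreserving (fun u : ℝ => 1 - u) (volume.restrict (Ioo 0 1))
      (volume.restrict (Ioo 0 1)) := by
  have := (volume.measurePreserving_sub_left (1 : ℝ)).restrict_preimage
    (measurableSet_Ioo (a := (0 : ℝ)) (b := 1))
  rwa [preimage_const_sub_Ioo, sub_self, sub_zero] at this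

section Quantile

open ProbabilityTheory

variable {η : Measure ℝ} {u w x : ℝ}

lemma nonempty_setOf_cdf_lt (hu : 0 < u) : {k | cdf η k < u}.Nonempty :=
  ((tendsto_cdf_atBot η).eventually_lt_const hu).exists

lemma bddAbove_setOf_cdf_lt (hu : u < 1) : BddAbove {k | cdf η k < u} := by
  obtain ⟨K, hK⟩ := eventually_atTop.1 ((tendsto_cdf_atTop η).eventually_const_lt hu)
  exact ⟨K, fun k hk => le_of_not_gt fun hKk => (hK k hKk.le).not_gt hk⟩

variable [IsProbabilityMeasure η]

lemma quantile_eq_sSup_cdf (u : ℝ) : quantile η u = sSup {k | cdf η k < u} := by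
  simp only [quantile, cdf_eq_real, measureReal_def]

lemma quantile_le_iff (hu : u ∈ Ioo 0 1) : quantile η u ≤ x ↔ u ≤ cdf η x := by
  rw [quantile_eq_sSup_cdf]
  constructor
  · intro hq
    by_contra! hx
    -- right-continuity of `cdf η` puts a point `y > x` into the set whose supremum is `≤ x`
    have hright := ((cdf η).right_continuous x).mono (Ioi_subset_Ici_self (a := x))
    obtain ⟨y, hyu, hxy⟩ := ((hright.eventually (gt_mem_nhds hx)).and self_mem_nhdsWithin).exists
    exact (hq.trans_lt hxy).not_ge (le_csSup (bddAbove_setOf_cdf_lt hu.2) hyu)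
  · exact fun hx => csSup_le (nonempty_setOf_cdf_lt hu.1)
      fun k hk => ((monotone_cdf η).reflect_lt (hk.trans_le hx)).le

lemma lt_quantile_iff (hu : u ∈ Ioo 0 1) : x < quantile η u ↔ cdf η x < u := by
  rw [← not_le, quantile_le_iff hu, not_le]

lemma quantile_monotoneOn : MonotoneOn (quantile η) (Ioo 0 1) := fun u hu _ hv huv => by
  rw [quantile_eq_sSup_cdf, quantile_eq_sSup_cdf]
  exact csSup_le_csSup (bddAbove_setOf_cdf_lt hv.2) (nonempty_setOf_cdf_lt hu.1)
    fun k hk => lt_of_lt_of_le hk huv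

lemma quantile_continuousWithinAt_Iic (hw : w ∈ Ioo 0 1) :
    ContinuousWithinAt (quantile η) (Iic w) w := by
  refine tendsto_order.2 ⟨fun c hc => ?_, fun c hc => ?_⟩
  · rw [lt_quantile_iff hw] at hc
    filter_upwards [nhdsWithin_le_nhds (lt_mem_nhds hc), self_mem_nhdsWithin] with v hcv hvw
    exact (lt_quantile_iff ⟨(cdf_nonneg η c).trans_lt hcv, hvw.trans_lt hw.2⟩).2 hcv
  · filter_upwards [nhdsWithin_le_nhds (lt_mem_nhds hw.1), self_mem_nhdsWithin] with v hv hvw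
    exact (quantile_monotoneOn ⟨hv, hvw.trans_lt hw.2⟩ hw hvw).trans_lt hc

lemma quantile_lt_of_lt_measureReal_Iio (hw : w ∈ Ioo 0 1) (h : w < η.real (Iio x)) :
    quantile η w < x := by
  have hleftLim : Function.leftLim (cdf η) x = η.real (Iio x) := by
    have := (cdf η).measure_Iio (tendsto_cdf_atBot η) x
    rw [measure_cdf, sub_zero] at this
    obtain ⟨y, hy⟩ := exists_lt x
    rw [measureReal_def, this, ENNReal.toReal_ofReal
      ((cdf_nonneg η y).trans ((monotone_cdf η).le_leftLim hy))]
  have hlim := (monotone_cdf η).tendsto_leftLim x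
  rw [hleftLim] at hlim
  obtain ⟨y, hwy, hyx⟩ := ((hlim.eventually (lt_mem_nhds h)).and self_mem_nhdsWithin).exists
  exact ((quantile_le_iff hw).2 hwy.le).trans_lt hyx

lemma aemeasurable_quantile : AEMeasurable (quantile η) (volume.restrict (Ioo 0 1)) :=
  aemeasurable_restrict_of_monotoneOn measurableSet_Ioo quantile_monotoneOn

lemma map_quantile : (volume.restrict (Ioo 0 1)).map (quantile η) = η := by
  refine Measure.ext_of_Iic _ η fun x => ?_
  have hpre : quantile η ⁻¹' Iic x ∩ Ioo 0 1 = Iic (cdf η x) ∩ Ioo 0 1 := by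
    ext u
    simp only [mem_inter_iff, mem_preimage, mem_Iic]
    exact and_congr_left quantile_le_iff
  calc (volume.restrict (Ioo 0 1)).map (quantile η) (Iic x)
      = volume.restrict (Ioo 0 1) (Iic (cdf η x)) := by
        rw [Measure.map_apply_of_aemeasurable aemeasurable_quantile measurableSet_Iic,
          Measure.restrict_apply' measurableSet_Ioo, Measure.restrict_apply' measurableSet_Ioo,
          hpre]
    _ = volume.restrict (Ioc 0 1) (Iic (cdf η x)) := by
        rw [Measure.restrict_congr_set Ioo_ae_eq_Ioc]
    _ = η (Iic x) := by
        rw [Measure.restrict_apply measurableSet_Iic, inter_comm, Ioc_inter_Iic,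
          min_eq_right (cdf_le_one η x), Real.volume_Ioc, sub_zero, ofReal_cdf]

lemma map_quantile_one_sub :
    (volume.restrict (Ioo 0 1)).map (fun u => quantile η (1 - u)) = η := by
  have hmp := measurePreserving_one_sub_restrict_Ioo
  have hq : AEMeasurable (quantile η) ((volume.restrict (Ioo 0 1)).map fun u : ℝ => 1 - u) := by
    rw [hmp.map_eq]
    exact aemeasurable_quantile
  change (volume.restrict (Ioo 0 1)).map (quantile η ∘ fun u => 1 - u) = η
  rw [← AEMeasurable.map_map_of_aemeasurable hq hmp.measurable.aemeasurable, hmp.map_eq,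
    map_quantile]

lemma antitoneOn_quantile_one_sub : AntitoneOn (fun u => quantile η (1 - u)) (Ioo 0 1) :=
  fun _ hu _ hv huv => quantile_monotoneOn (one_sub_mem_Ioo hv) (one_sub_mem_Ioo hu)
    (sub_le_sub_left huv 1)

lemma quantile_one_sub_continuousWithinAt_Ici (hu : u ∈ Ioo 0 1) :
    ContinuousWithinAt (fun u => quantile η (1 - u)) (Ici u) u :=
  (quantile_continuousWithinAt_Iic (one_sub_mem_Ioo hu)).comp
    (continuous_const.sub continuous_id).continuousWithinAt
    fun _ hv => sub_le_sub_left (mem_Ici.1 hv) 1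

lemma quantile_lt_quantile_of_separated {μ ν : Measure ℝ} [IsProbabilityMeasure μ]
    [IsProbabilityMeasure ν] {l : ℝ} (hμ : μ (Iio l) = 0) (hν : ν (Ioi l) = 0)
    (hatom : μ {l} * ν {l} = 0) (hw : w ∈ Ioo 0 1) (hu : u ∈ Ioo 0 1) :
    quantile ν w < quantile μ u := by
  have hνIic : ν (Iic l) = 1 := by
    rw [← prob_compl_eq_zero_iff measurableSet_Iic, compl_Iic, hν]
  have hcdf_lt : ∀ x < l, cdf μ x < u := fun x hx => by
    rw [cdf_eq_real, measureReal_def, measure_mono_null (Iic_subset_Iio.2 hx) hμ]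
    exact hu.1
  have hl_le : l ≤ quantile μ u :=
    le_of_forall_lt fun x hx => (lt_quantile_iff hu).2 (hcdf_lt x hx)
  rcases mul_eq_zero.1 hatom with hμl | hνl
  · have hcdf_ν : w ≤ cdf ν l := by
      rw [cdf_eq_real, measureReal_def, hνIic]
      exact hw.2.le
    have hcdf_μ : cdf μ l < u := by
      rw [cdf_eq_real, measureReal_def, ← Iio_union_right, measure_union_null hμ hμl]
      exact hu.1
    calc quantile ν w ≤ l := (quantile_le_iff hw).2 hcdf_ν
      _ < quantile μ u := (lt_quantile_iff hu).2 hcdf_μ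
  · have hνIio : ν.real (Iio l) = 1 := by
      rw [measureReal_def, measure_congr (Iio_ae_eq_Iic' hνl), hνIic, ENNReal.toReal_one]
    exact (quantile_lt_of_lt_measureReal_Iio hw (hνIio ▸ hw.2)).trans_le hl_le

end Quantile

lemma isSupermartingaleCoupling_map_of_ae_le {Ω : Type*} [MeasurableSpace Ω] {P : Measure Ω}
    [IsProbabilityMeasure P] {μ ν : Measure ℝ} {f g : Ω → ℝ}
    (hf : AEMeasurable f P) (hg : AEMeasurable g P) (hfμ : P.map f = μ) (hgν : P.map g = ν)
    (hμ : Integrable (fun x : ℝ => x) μ) (hν : Integrable (fun x : ℝ => x) ν) (hgf : g ≤ᵐ[P] f) :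
    IsSupermartingaleCoupling μ ν (P.map fun ω => (f ω, g ω)) := by
  have hfg : AEMeasurable (fun ω => (f ω, g ω)) P := hf.prodMk hg
  have hf_int : Integrable f P :=
    (integrable_map_measure aestronglyMeasurable_id hf).1 (hfμ ▸ hμ)
  have hg_int : Integrable g P :=
    (integrable_map_measure aestronglyMeasurable_id hg).1 (hgν ▸ hν)
  refine ⟨Measure.isProbabilityMeasure_map hfg, (Measure.fst_map_prodMk₀ hg).trans hfμ,
    (Measure.snd_map_prodMk₀ hf).trans hgν,
    (integrable_map_measure measurable_snd.aestronglyMeasurable hfg).2 hg_int, fun B hB => ?_⟩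
  rw [setIntegral_map (hB.prod MeasurableSet.univ) measurable_snd.aestronglyMeasurable hfg,
    ← hfμ, setIntegral_map hB measurable_id'.aestronglyMeasurable hf,
    show (fun ω => (f ω, g ω)) ⁻¹' B ×ˢ univ = f ⁻¹' B by ext; simp]
  exact integral_mono_ae hg_int.restrict hf_int.restrict (ae_restrict_of_ae hgf)

/-- Proposition 4.10: the antitone map `T(u) = G_ν(1-u)` defines the increasing
supermartingale coupling when the support of `ν` lies to the left of that of `μ`. -/
theorem antitone_map_supermartingale_coupling
    (μ ν : MeasureTheory.Measure ℝ)
    [MeasureTheory.IsProbabilityMeasure μ] [MeasureTheory.IsProbabilityMeasure ν]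
    (hμ : MeasureTheory.Integrable (fun x : ℝ => x) μ)
    (hν : MeasureTheory.Integrable (fun x : ℝ => x) ν)
    (hsupp : ∀ x ∈ msupport ν, ∀ y ∈ msupport μ, x ≤ y)
    (hatom : μ {sInf (msupport μ)} * ν {sInf (msupport μ)} = 0) :
    AntitoneOn (fun u => quantile ν (1 - u)) (Set.Ioo (0:ℝ) 1) ∧
    (∀ u ∈ Set.Ioo (0:ℝ) 1,
      ContinuousWithinAt (fun u => quantile ν (1 - u)) (Set.Ici u) u) ∧
    (∀ u ∈ Set.Ioo (0:ℝ) 1, quantile ν (1 - u) < quantile μ u) ∧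
    IsSupermartingaleCoupling μ ν
      ((MeasureTheory.volume.restrict (Set.Ioo (0:ℝ) 1)).map
        (fun u : ℝ => (quantile μ u, quantile ν (1 - u)))) := by
  simp only [msupport_eq_support] at hsupp hatom
  have hμ_bdd : BddBelow μ.support :=
    (Measure.nonempty_support (NeZero.ne ν)).imp fun x hx _ hy => hsupp x hx _ hy
  have hμl : μ (Iio (sInf μ.support)) = 0 :=
    measure_Iio_eq_zero_of_le_support fun _ hy => csInf_le hμ_bdd hy
  have hνl : ν (Ioi (sInf μ.support)) = 0 :=
    measure_Ioi_eq_zero_of_support_le fun x hx =>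
      le_csInf (Measure.nonempty_support (NeZero.ne μ)) (hsupp x hx)
  have hlt : ∀ u ∈ Ioo (0 : ℝ) 1, quantile ν (1 - u) < quantile μ u := fun u hu =>
    quantile_lt_quantile_of_separated hμl hνl hatom (one_sub_mem_Ioo hu) hu
  refine ⟨antitoneOn_quantile_one_sub, fun u hu => quantile_one_sub_continuousWithinAt_Ici hu,
    hlt, isSupermartingaleCoupling_map_of_ae_le aemeasurable_quantile
      (aemeasurable_restrict_of_antitoneOn measurableSet_Ioo antitoneOn_quantile_one_sub)
      map_quantile map_quantile_one_sub hμ hν ?_⟩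
  filter_upwards [ae_restrict_mem measurableSet_Ioo] with u hu
  exact (hlt u hu).le
end
end

section
/- Let η, χ ∈ 𝓜 have disjoint topological supports, with the support of η nonempty and bounded; set ℓ = inf(supp η) and r = sup(supp η). If 0 < η(ℝ) ≤ min( χ((−∞,ℓ]), χ([r,∞)) ), then η ≤_pc χ. -/
open MeasureTheory Set Filter

noncomputable section

/-!
The support of `η` lies in `[ℓ, r]`, and a nonnegative convex `f` satisfies
`f x ≤ max (f y) (f z) ≤ f y + f z` for `y ≤ x ≤ z`. By the first moment method there are
`y ≤ ℓ` and `z ≥ r` at which `f` is at most its `χ`-average over `(-∞, ℓ]` and `[r, ∞)`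
respectively, so the mass condition gives `∫ f dη ≤ ∫_{(-∞,ℓ]} f dχ + ∫_{[r,∞)} f dχ`.
These two tails can only overlap in `{ℓ}`, which is `χ`-null because `ℓ ∈ supp η`.
-/

lemma msupport_eq_support_s3 (μ : Measure ℝ) : msupport μ = μ.support := by
  ext x
  simp [msupport, Measure.mem_support_iff_forall, pos_iff_ne_zero]

lemma measure_singleton_eq_zero_of_notMem_support {X : Type*} [TopologicalSpace X]
    [MeasurableSpace X] {μ : Measure X} {x : X} (hx : x ∉ μ.support) : μ {x} = 0 := by
  obtain ⟨U, hU, hU0⟩ := Measure.notMem_support_iff_exists.1 hx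
  exact measure_mono_null (singleton_subset_iff.2 (mem_of_mem_nhds hU)) hU0

lemma exists_mem_mul_le_setIntegral {α : Type*} [MeasurableSpace α] {μ : Measure α}
    {s : Set α} {f : α → ℝ} (hs : μ s ≠ 0) (hs' : μ s ≠ ⊤) (hf : IntegrableOn f s μ) :
    ∃ x ∈ s, μ.real s * f x ≤ ∫ a in s, f a ∂μ := by
  obtain ⟨x, hx, hle⟩ := exists_le_setAverage hs hs' hf
  refine ⟨x, hx, ?_⟩
  rw [setAverage_eq, smul_eq_mul] at hle
  have hpos : 0 < μ.real s := ENNReal.toReal_pos hs hs'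
  rwa [le_inv_mul_iff₀ hpos] at hle

theorem integral_le_setIntegral_Iic_add_setIntegral_Ici {η χ : Measure ℝ} [IsFiniteMeasure η]
    [IsFiniteMeasure χ] {f : ℝ → ℝ} (hf0 : ∀ x, 0 ≤ f x) (hfc : ConvexOn ℝ univ f)
    (hfχ : Integrable f χ) {l r : ℝ} (hη : ∀ᵐ x ∂η, x ∈ Icc l r) (hpos : η univ ≠ 0)
    (hl : η univ ≤ χ (Iic l)) (hr : η univ ≤ χ (Ici r)) :
    ∫ x, f x ∂η ≤ ∫ x in Iic l, f x ∂χ + ∫ x in Ici r, f x ∂χ := by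
  obtain ⟨y, hy, hfy⟩ :=
    exists_mem_mul_le_setIntegral (ne_bot_of_le_ne_bot hpos hl) (measure_ne_top χ _)
      hfχ.integrableOn
  obtain ⟨z, hz, hfz⟩ :=
    exists_mem_mul_le_setIntegral (ne_bot_of_le_ne_bot hpos hr) (measure_ne_top χ _)
      hfχ.integrableOn
  have hf_le : ∀ᵐ x ∂η, f x ≤ f y + f z := hη.mono fun x hx =>
    (hfc.le_max_of_mem_Icc trivial trivial ⟨hy.trans hx.1, hx.2.trans hz⟩).trans
      (max_le_add_of_nonneg (hf0 y) (hf0 z))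
  calc ∫ x, f x ∂η ≤ ∫ _, (f y + f z) ∂η :=
        integral_mono_of_nonneg (ae_of_all _ hf0) (integrable_const _) hf_le
    _ = η.real univ * f y + η.real univ * f z := by rw [integral_const, smul_eq_mul, mul_add]
    _ ≤ χ.real (Iic l) * f y + χ.real (Ici r) * f z := by
        gcongr
        · exact hf0 y
        · exact ENNReal.toReal_mono (measure_ne_top χ _) hl
        · exact hf0 z
        · exact ENNReal.toReal_mono (measure_ne_top χ _) hr
    _ ≤ ∫ x in Iic l, f x ∂χ + ∫ x in Ici r, f x ∂χ := add_le_add hfy hfz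

/-- Lemma 2.3: a sufficient condition for the positive convex order when the
supports are disjoint. -/
theorem lePC_of_disjoint_support
    (η χ : MeasureTheory.Measure ℝ) (hη : MemM η) (hχ : MemM χ)
    (hdisj : Disjoint (msupport η) (msupport χ))
    (hne : (msupport η).Nonempty)
    (hbdd : Bornology.IsBounded (msupport η))
    (hpos : 0 < η Set.univ)
    (hle : η Set.univ ≤
      min (χ (Set.Iic (sInf (msupport η)))) (χ (Set.Ici (sSup (msupport η))))) :
    LePC η χ := by
  have := hη.1
  have := hχ.1
  intro f hf0 hfc _ hfχ
  simp only [msupport_eq_support_s3, le_min_iff] at hdisj hne hbdd hle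
  set l := sInf η.support
  set r := sSup η.support
  have hlr : l ≤ r := csInf_le_csSup hne hbdd.bddBelow hbdd.bddAbove
  have hη_Icc : ∀ᵐ x ∂η, x ∈ Icc l r := mem_of_superset Measure.support_mem_ae fun x hx =>
    ⟨csInf_le hbdd.bddBelow hx, le_csSup hbdd.bddAbove hx⟩
  have hχl : χ {l} = 0 := measure_singleton_eq_zero_of_notMem_support <|
    disjoint_left.1 hdisj (Measure.isClosed_support.csInf_mem hne hbdd.bddBelow)
  have htails : AEDisjoint χ (Iic l) (Ici r) :=
    measure_mono_null (fun x hx => le_antisymm hx.1 (hlr.trans hx.2)) hχl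
  calc ∫ x, f x ∂η ≤ ∫ x in Iic l, f x ∂χ + ∫ x in Ici r, f x ∂χ :=
        integral_le_setIntegral_Iic_add_setIntegral_Ici hf0 hfc hfχ hη_Icc hpos.ne' hle.1 hle.2
    _ = ∫ x in Iic l ∪ Ici r, f x ∂χ :=
        (setIntegral_union₀ htails measurableSet_Ici.nullMeasurableSet hfχ.integrableOn
          hfχ.integrableOn).symm
    _ ≤ ∫ x, f x ∂χ := setIntegral_le_integral hfχ (ae_of_all _ hf0)
end
end

section
/- Let η and χ be Borel probability measures on ℝ with finite first moments such that η ≤_cd χ, and suppose P_η(x) = P_χ(x) for some x ∈ ℝ. Then every supermartingale coupling π of η and χ satisfies π((−∞,x)×(x,∞)) + π((x,∞)×(−∞,x)) = 0. -/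
/-!
Write `X, Y` for the coordinates under `π` and `A = {X < x}`. Pointwise,
`(x - Y)⁺ = (x - X)⁺ + 1_A (X - Y) + e`, where the excess `e` is `(Y - x)⁺` on `A` and `(x - Y)⁺`
off `A`; it is nonnegative and strictly positive wherever the pair crosses `x`. Integrating,
`P_χ(x) = P_η(x) + E[1_A (X - Y)] + E[e]`, and the supermartingale property makes the middle term
nonnegative. So if the potentials touch at `x`, then `E[e] = 0` and no mass crosses `x`.
-/

open MeasureTheory Set Filter

noncomputable section

def crossingExcess (x : ℝ) (p : ℝ × ℝ) : ℝ :=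
  max (x - p.2) 0 - max (x - p.1) 0 - (Prod.fst ⁻¹' Iio x).indicator (fun q => q.1 - q.2) p

lemma crossingExcess_of_lt {x : ℝ} {p : ℝ × ℝ} (hp : p.1 < x) :
    crossingExcess x p = max (p.2 - x) 0 := by
  rw [crossingExcess, indicator_of_mem (show p ∈ Prod.fst ⁻¹' Iio x from hp),
    max_eq_left (sub_nonneg.2 hp.le)]
  rcases le_total p.2 x with h | h
  · rw [max_eq_left (sub_nonneg.2 h), max_eq_right (sub_nonpos.2 h)]
    ring
  · rw [max_eq_right (sub_nonpos.2 h), max_eq_left (sub_nonneg.2 h)]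
    ring

lemma crossingExcess_of_le {x : ℝ} {p : ℝ × ℝ} (hp : x ≤ p.1) :
    crossingExcess x p = max (x - p.2) 0 := by
  rw [crossingExcess, indicator_of_notMem (show p ∉ Prod.fst ⁻¹' Iio x from hp.not_gt),
    max_eq_right (sub_nonpos.2 hp), sub_zero, sub_zero]

lemma crossingExcess_nonneg (x : ℝ) (p : ℝ × ℝ) : 0 ≤ crossingExcess x p := by
  rcases lt_or_ge p.1 x with hp | hp
  · exact (crossingExcess_of_lt hp).symm ▸ le_max_right _ _
  · exact (crossingExcess_of_le hp).symm ▸ le_max_right _ _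

lemma crossingExcess_pos_of_mem_crossing {x : ℝ} {p : ℝ × ℝ}
    (hp : p ∈ Iio x ×ˢ Ioi x ∪ Ioi x ×ˢ Iio x) : 0 < crossingExcess x p := by
  rcases hp with ⟨hp1, hp2⟩ | ⟨hp1, hp2⟩
  · rw [crossingExcess_of_lt hp1]
    exact lt_max_of_lt_left (sub_pos.2 hp2)
  · rw [crossingExcess_of_le (le_of_lt hp1)]
    exact lt_max_of_lt_left (sub_pos.2 hp2)

section

variable {π : Measure (ℝ × ℝ)} [IsFiniteMeasure π]
  (hX : Integrable (fun p : ℝ × ℝ => p.1) π) (hY : Integrable (fun p : ℝ × ℝ => p.2) π)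
include hX hY

lemma integrable_crossingExcess (x : ℝ) : Integrable (crossingExcess x) π :=
  ((((integrable_const x).sub hY).pos_part.sub ((integrable_const x).sub hX).pos_part).sub
    ((hX.sub hY).indicator (measurable_fst measurableSet_Iio)))

lemma integral_crossingExcess (x : ℝ) :
    ∫ p, crossingExcess x p ∂π = ∫ p, max (x - p.2) 0 ∂π - ∫ p, max (x - p.1) 0 ∂π
      - (∫ p in Prod.fst ⁻¹' Iio x, p.1 ∂π - ∫ p in Prod.fst ⁻¹' Iio x, p.2 ∂π) := by
  have hA : MeasurableSet (Prod.fst ⁻¹' Iio x : Set (ℝ × ℝ)) := measurable_fst measurableSet_Iio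
  unfold crossingExcess
  rw [integral_sub, integral_sub, integral_indicator hA,
    integral_sub hX.integrableOn hY.integrableOn]
  · exact ((integrable_const x).sub hY).pos_part
  · exact ((integrable_const x).sub hX).pos_part
  · exact ((integrable_const x).sub hY).pos_part.sub ((integrable_const x).sub hX).pos_part
  · exact (hX.sub hY).indicator hA

theorem measure_crossing_eq_zero {x : ℝ}
    (hsup : ∫ p in Prod.fst ⁻¹' Iio x, p.2 ∂π ≤ ∫ p in Prod.fst ⁻¹' Iio x, p.1 ∂π)
    (hpot : ∫ p, max (x - p.2) 0 ∂π ≤ ∫ p, max (x - p.1) 0 ∂π) :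
    π (Iio x ×ˢ Ioi x) + π (Ioi x ×ˢ Iio x) = 0 := by
  have hint : ∫ p, crossingExcess x p ∂π ≤ 0 := by
    rw [integral_crossingExcess hX hY]
    linarith
  have hsupp : π (Function.support (crossingExcess x)) = 0 := by
    by_contra h
    have := (integral_pos_iff_support_of_nonneg (crossingExcess_nonneg x)
      (integrable_crossingExcess hX hY x)).2 (pos_iff_ne_zero.2 h)
    linarith
  rw [measure_mono_null (fun p hp => (crossingExcess_pos_of_mem_crossing (.inl hp)).ne') hsupp,
    measure_mono_null (fun p hp => (crossingExcess_pos_of_mem_crossing (.inr hp)).ne') hsupp,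
    add_zero]

end

lemma Ppot_map {α : Type*} [MeasurableSpace α] {μ : Measure α} {f : α → ℝ} (hf : Measurable f)
    (k : ℝ) : Ppot (μ.map f) k = ∫ a, max (k - f a) 0 ∂μ :=
  integral_map hf.aemeasurable (by fun_prop)

theorem no_mass_crosses_touching_point_general
    (η χ : MeasureTheory.Measure ℝ)
    (hη : MeasureTheory.Integrable (fun x : ℝ => x) η)
    (x : ℝ) (hx : Ppot η x = Ppot χ x)
    (π : MeasureTheory.Measure (ℝ × ℝ)) (hπ : IsSupermartingaleCoupling η χ π) :
    π (Set.Iio x ×ˢ Set.Ioi x) + π (Set.Ioi x ×ˢ Set.Iio x) = 0 := by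
  obtain ⟨hprob, rfl, rfl, hY, hsup⟩ := hπ
  have hX : Integrable (fun p : ℝ × ℝ => p.1) π :=
    (integrable_map_measure hη.aestronglyMeasurable measurable_fst.aemeasurable).1 hη
  have hsupA := hsup (Iio x) measurableSet_Iio
  rw [prod_univ, setIntegral_map (f := fun t : ℝ => t) measurableSet_Iio
    measurable_id.aestronglyMeasurable measurable_fst.aemeasurable] at hsupA
  rw [Ppot_map measurable_fst, Ppot_map measurable_snd] at hx
  exact measure_crossing_eq_zero hX hY hsupA hx.ge

/-- Lemma 2.4: if the potentials of `η` and `χ` touch at `x`, then no mass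
crosses `x` under any supermartingale coupling. -/
theorem no_mass_crosses_touching_point
    (η χ : MeasureTheory.Measure ℝ)
    [MeasureTheory.IsProbabilityMeasure η] [MeasureTheory.IsProbabilityMeasure χ]
    (hη : MeasureTheory.Integrable (fun x : ℝ => x) η)
    (hχ : MeasureTheory.Integrable (fun x : ℝ => x) χ)
    (hcd : LeCD η χ) (x : ℝ) (hx : Ppot η x = Ppot χ x)
    (π : MeasureTheory.Measure (ℝ × ℝ)) (hπ : IsSupermartingaleCoupling η χ π) :
    π (Set.Iio x ×ˢ Set.Ioi x) + π (Set.Ioi x ×ˢ Set.Iio x) = 0 :=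
  no_mass_crosses_touching_point_general η χ hη x hx π hπ
end
end

section
/- Let f : ℝ → ℝ be lower semicontinuous and let h : ℝ → ℝ be the convex hull of f. If a < b and f(y) > h(y) for all y ∈ (a,b), then h is affine on (a,b); that is, there exist m, c ∈ ℝ with h(y) = m·y + c for all y ∈ (a,b). -/
open MeasureTheory Set Filter

noncomputable section

/-!
Suppose `h = f^c` dips strictly below a chord `ℓ` over some `[x, z] ⊆ (a, b)`, and let `D > 0` be
the maximum of `ℓ - h` on `[x, z]`. Since `f - h` is lower semicontinuous and positive on `[x, z]`,
it has a positive minimum there, so for small `δ ∈ (0, D]` the function `max h (ℓ - D + δ)` is a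
convex minorant of `f` exceeding `h` where `ℓ - h = D`, which is absurd. Hence `h` is concave as
well as convex on `(a, b)`, so its secant slopes there are constant.
-/

theorem add_slope_mul_sub {𝕜 : Type*} [Field 𝕜] (f : 𝕜 → 𝕜) (x t : 𝕜) :
    f x + slope f x t * (t - x) = f t := by
  rw [mul_comm, ← smul_eq_mul, sub_smul_slope, vsub_eq_sub]
  ring

section Slope

variable {𝕜 : Type*} [Field 𝕜] [LinearOrder 𝕜] [IsStrictOrderedRing 𝕜] {s : Set 𝕜} {f : 𝕜 → 𝕜}

theorem ConvexOn.add_slope_mul_sub_le (hf : ConvexOn 𝕜 s f) {x z t : 𝕜} (hx : x ∈ s) (hz : z ∈ s)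
    (ht : t ∈ s) (hxz : x < z) (htxz : t ∉ Ioo x z) : f x + slope f x z * (t - x) ≤ f t := by
  rcases eq_or_ne t x with rfl | htx
  · simp
  rw [← add_slope_mul_sub f x t, add_le_add_iff_left]
  rcases htx.lt_or_gt with htx' | htx'
  · exact mul_le_mul_of_nonpos_right
      (hf.slope_mono hx ⟨ht, htx⟩ ⟨hz, hxz.ne'⟩ (htx'.trans hxz).le) (sub_nonpos.2 htx'.le)
  · have hzt : z ≤ t := not_lt.1 fun h => htxz ⟨htx', h⟩
    exact mul_le_mul_of_nonneg_right
      (hf.slope_mono hx ⟨hz, hxz.ne'⟩ ⟨ht, htx⟩ hzt) (sub_nonneg.2 htx'.le)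

theorem ConvexOn.eq_add_slope_mul_sub_of_concaveOn (hconv : ConvexOn 𝕜 s f)
    (hconc : ConcaveOn 𝕜 s f) {p q y : 𝕜} (hp : p ∈ s) (hq : q ∈ s) (hy : y ∈ s) (hqp : q ≠ p) :
    f y = f p + slope f p q * (y - p) := by
  rcases eq_or_ne y p with rfl | hyp
  · simp
  have hslope : slope f p y = slope f p q := by
    rcases le_total y q with hyq | hqy
    · exact le_antisymm (hconv.slope_mono hp ⟨hy, hyp⟩ ⟨hq, hqp⟩ hyq)
        (hconc.slope_anti hp ⟨hy, hyp⟩ ⟨hq, hqp⟩ hyq)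
    · exact le_antisymm (hconc.slope_anti hp ⟨hq, hqp⟩ ⟨hy, hyp⟩ hqy)
        (hconv.slope_mono hp ⟨hq, hqp⟩ ⟨hy, hyp⟩ hqy)
  rw [← hslope, add_slope_mul_sub]

end Slope

theorem IsConvexHullFn.affine_le_of_forall_notMem_le {f h : ℝ → ℝ} (hh : IsConvexHullFn f h)
    {K : Set ℝ} (hK : IsCompact K) (hf : LowerSemicontinuousOn f K) (hlt : ∀ x ∈ K, h x < f x)
    {m c : ℝ} (hoff : ∀ x ∉ K, m * x + c ≤ h x) (x₀ : ℝ) : m * x₀ + c ≤ h x₀ := by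
  obtain ⟨hconv, hle, hmax⟩ := hh
  by_contra! hx₀
  have hx₀K : x₀ ∈ K := by_contra fun hx₀K => (hoff x₀ hx₀K).not_gt hx₀
  have hcont : Continuous h := continuousOn_univ.1 (hconv.continuousOn isOpen_univ)
  obtain ⟨xs, hxsK, hxs⟩ := hK.exists_isMaxOn ⟨x₀, hx₀K⟩
    (show Continuous fun x => m * x + c - h x by fun_prop).continuousOn
  obtain ⟨xm, hxmK, hxm⟩ := LowerSemicontinuousOn.exists_isMinOn ⟨x₀, hx₀K⟩ hK
    (hf.add hcont.neg.continuousOn.lowerSemicontinuousOn)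
  set D := m * xs + c - h xs
  set δ := min D (f xm + -h xm)
  have hD : 0 < D := (sub_pos.2 hx₀).trans_le (hxs hx₀K)
  have hδ : 0 < δ := lt_min hD (by linarith [hlt xm hxmK])
  have hg : ConvexOn ℝ univ (h ⊔ fun x => m * x + (c - D + δ)) :=
    hconv.sup (((LinearMap.mul ℝ ℝ m).convexOn convex_univ).add_const _)
  have hgf : ∀ x, (h ⊔ fun x => m * x + (c - D + δ)) x ≤ f x := by
    intro x
    refine max_le (hle x) ?_
    by_cases hxK : x ∈ K
    · have h₁ : m * x + c - h x ≤ D := hxs hxK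
      have h₂ : f xm + -h xm ≤ f x + -h x := hxm hxK
      linarith [min_le_right D (f xm + -h xm)]
    · linarith [hoff x hxK, hle x, min_le_left D (f xm + -h xm)]
  have hgh := hmax _ hg hgf xs
  simp only [Pi.sup_apply, sup_le_iff] at hgh
  linarith [hgh.2]

/-- Lemma 2.6: if `f` is lower semicontinuous and `f > f^c` on `(a,b)`, then
the convex hull `f^c` is affine on `(a,b)`. -/
theorem convexHull_affine_where_strictly_below
    (f h : ℝ → ℝ) (hf : LowerSemicontinuous f) (hh : IsConvexHullFn f h)
    (a b : ℝ) (hab : a < b) (hgt : ∀ y ∈ Set.Ioo a b, h y < f y) :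
    ∃ m c : ℝ, ∀ y ∈ Set.Ioo a b, h y = m * y + c := by
  have hconv : ConvexOn ℝ (Ioo a b) h := hh.1.subset (subset_univ _) (convex_Ioo a b)
  have hconc : ConcaveOn ℝ (Ioo a b) h := by
    refine LinearOrder.concaveOn_of_lt (convex_Ioo a b) fun x hx z hz hxz μ ν hμ hν hμν => ?_
    have hchord := hh.affine_le_of_forall_notMem_le (m := slope h x z)
      (c := h x - slope h x z * x) isCompact_Icc (hf.lowerSemicontinuousOn _)
      (fun t ht => hgt t ⟨hx.1.trans_le ht.1, ht.2.trans_lt hz.2⟩)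
      (fun t ht => by
        linarith [hh.1.add_slope_mul_sub_le (mem_univ x) (mem_univ z) (mem_univ t) hxz
          fun ht' => ht (Ioo_subset_Icc_self ht')])
      (μ • x + ν • z)
    simp only [smul_eq_mul] at hchord ⊢
    linear_combination hchord - ν * add_slope_mul_sub h x z + (h x - slope h x z * x) * hμν
  obtain ⟨p, hp, q, hq, hqp⟩ := (Ioo_infinite hab).nontrivial
  exact ⟨slope h p q, h p - slope h p q * p, fun y hy => by
    rw [hconv.eq_add_slope_mul_sub_of_concaveOn hconc hp hq hy hqp.symm]; ring⟩
end
end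

section
/- Let f, g : ℝ → ℝ be convex and suppose h : ℝ → ℝ is the convex hull of g − f. Then the function g − h is convex on ℝ. -/
open MeasureTheory Set Filter

noncomputable section

/-!
Fix `p ≤ q` and an affine `A` lying above `g - h` at `p` and `q`. Then `ψ = g - A` is convex and
lies below `h` at `p` and `q`. Since `f` is convex and `f ≤ g - h ≤ A` at `p` and `q`, also
`f ≤ A` on `[p, q]`, i.e. `ψ ≤ g - f` there. Raising `h` to `max h ψ` on `[p, q]` therefore
yields a convex minorant of `g - f`, so `ψ ≤ h` on `[p, q]` by maximality of the hull; that is,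
`g - h ≤ A` on `[p, q]`, which is convexity of `g - h`.
-/

lemma concaveOn_univ_affine (α β : ℝ) : ConcaveOn ℝ univ (fun x : ℝ => α * x + β) :=
  ⟨convex_univ, fun _ _ _ _ _ _ _ _ hst =>
    le_of_eq (by simp only [smul_eq_mul]; linear_combination β * hst)⟩

lemma ConvexOn.le_affine_of_le_of_le {F : ℝ → ℝ} (hF : ConvexOn ℝ univ F) {α β p q : ℝ}
    (hp : F p ≤ α * p + β) (hq : F q ≤ α * q + β) {z : ℝ} (hz : z ∈ Icc p q) :
    F z ≤ α * z + β := by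
  have hG := (hF.sub (concaveOn_univ_affine α β)).le_on_segment (mem_univ p) (mem_univ q)
    (segment_eq_Icc (hz.1.trans hz.2) ▸ hz)
  simp only [Pi.sub_apply, le_max_iff] at hG
  rcases hG with hG | hG <;> linarith

lemma convexOn_univ_of_le_affine {F : ℝ → ℝ}
    (hF : ∀ p q α β, p ≤ q → F p ≤ α * p + β → F q ≤ α * q + β →
      ∀ z ∈ Icc p q, F z ≤ α * z + β) :
    ConvexOn ℝ univ F := by
  refine ⟨convex_univ, ?_⟩
  rintro x - y - s t hs ht hst
  wlog hxy : x ≤ y generalizing x y s t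
  · rw [add_comm (s • x), add_comm (s • F x)]
    exact this ht hs (by linarith) (by linarith)
  simp only [smul_eq_mul]
  rcases hxy.eq_or_lt with rfl | hxy
  · rw [← add_mul, ← add_mul, hst, one_mul, one_mul]
  obtain ⟨α, β, hx, hy⟩ : ∃ α β, F x = α * x + β ∧ F y = α * y + β := by
    refine ⟨(F y - F x) / (y - x), F x - (F y - F x) / (y - x) * x, by ring, ?_⟩
    field_simp [sub_ne_zero.2 hxy.ne']
    ring
  have hz : s * x + t * y ∈ Icc x y := by
    rw [← segment_eq_Icc hxy.le]; exact ⟨s, t, hs, ht, hst, rfl⟩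
  calc F (s * x + t * y) ≤ α * (s * x + t * y) + β := hF x y α β hxy.le hx.le hy.le _ hz
    _ = s * F x + t * F y := by rw [hx, hy]; linear_combination (-β) * hst

lemma ConvexOn.ite_Icc_max {φ ψ : ℝ → ℝ} (hφ : ConvexOn ℝ univ φ) (hψ : ConvexOn ℝ univ ψ)
    {a b : ℝ} (ha : ψ a ≤ φ a) (hb : ψ b ≤ φ b) :
    ConvexOn ℝ univ (fun z => if z ∈ Icc a b then max (φ z) (ψ z) else φ z) := by
  refine convexOn_univ_of_le_affine fun p q α β _ hp hq z hz => ?_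
  set Φ : ℝ → ℝ := fun z => if z ∈ Icc a b then max (φ z) (ψ z) else φ z
  have hφΦ (x : ℝ) : φ x ≤ Φ x := by
    simp only [Φ]; split_ifs
    exacts [le_max_left _ _, le_rfl]
  have hψΦ {x : ℝ} (hx : x ∈ Icc a b) : ψ x ≤ Φ x := by
    simp only [Φ, if_pos hx]; exact le_max_right _ _
  have hφA {x : ℝ} (hx : x ∈ Icc p q) : φ x ≤ α * x + β :=
    hφ.le_affine_of_le_of_le ((hφΦ p).trans hp) ((hφΦ q).trans hq) hx
  split_ifs with hzab
  · refine max_le (hφA hz) ?_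
    -- `ψ` lies below the affine function at the ends of `[p, q] ∩ [a, b]`: there it is
    -- bounded either by `Φ` (at `p`, `q`) or by `φ` (at `a`, `b`).
    have hp' : ψ (max p a) ≤ α * max p a + β := by
      rcases le_total a p with hap | hpa
      · rw [max_eq_left hap]; exact (hψΦ ⟨hap, hz.1.trans hzab.2⟩).trans hp
      · rw [max_eq_right hpa]; exact ha.trans (hφA ⟨hpa, hzab.1.trans hz.2⟩)
    have hq' : ψ (min q b) ≤ α * min q b + β := by
      rcases le_total q b with hqb | hbq
      · rw [min_eq_left hqb]; exact (hψΦ ⟨hzab.1.trans hz.2, hqb⟩).trans hq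
      · rw [min_eq_right hbq]; exact hb.trans (hφA ⟨hz.1.trans hzab.2, hbq⟩)
    exact hψ.le_affine_of_le_of_le hp' hq' ⟨max_le hz.1 hzab.1, le_min hz.2 hzab.2⟩
  · exact hφA hz

lemma IsConvexHullFn.le_of_le_on_Icc {F h ψ : ℝ → ℝ} (hh : IsConvexHullFn F h)
    (hψ : ConvexOn ℝ univ ψ) {a b : ℝ} (ha : ψ a ≤ h a) (hb : ψ b ≤ h b)
    (hψF : ∀ x ∈ Icc a b, ψ x ≤ F x) {z : ℝ} (hz : z ∈ Icc a b) : ψ z ≤ h z := by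
  have hglued_le (x : ℝ) : (if x ∈ Icc a b then max (h x) (ψ x) else h x) ≤ F x := by
    split_ifs with hx
    exacts [max_le (hh.2.1 x) (hψF x hx), hh.2.1 x]
  have := hh.2.2 _ (hh.1.ite_Icc_max hψ ha hb) hglued_le z
  rw [if_pos hz] at this
  exact (le_max_right _ _).trans this

/-- Lemma 2.8: if `f, g` are convex and `h = (g - f)^c`, then `g - h` is convex. -/
theorem convex_sub_convexHull
    (f g h : ℝ → ℝ) (hf : ConvexOn ℝ Set.univ f) (hg : ConvexOn ℝ Set.univ g)
    (hh : IsConvexHullFn (fun x => g x - f x) h) :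
    ConvexOn ℝ Set.univ (fun x => g x - h x) := by
  refine convexOn_univ_of_le_affine fun p q α β _ hp hq z hz => ?_
  have hf_le (x : ℝ) (hx : x ∈ Icc p q) : f x ≤ α * x + β :=
    hf.le_affine_of_le_of_le (by linarith [hh.2.1 p]) (by linarith [hh.2.1 q]) hx
  have hψ_le := hh.le_of_le_on_Icc (hg.sub (concaveOn_univ_affine α β))
    (by simp only [Pi.sub_apply]; linarith) (by simp only [Pi.sub_apply]; linarith)
    (fun x hx => by simp only [Pi.sub_apply]; linarith [hf_le x hx]) hz
  simp only [Pi.sub_apply] at hψ_le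
  linarith
end
end

section
/- Let f : ℝ → ℝ be any function and let g : ℝ → ℝ be convex. Suppose h₁ : ℝ → ℝ is the convex hull of f, h₂ : ℝ → ℝ is the convex hull of f − g, and h₃ : ℝ → ℝ is the convex hull of h₁ − g. Then h₂ = h₃. -/
open MeasureTheory Set Filter

noncomputable section

namespace IsConvexHullFn

theorem unique {f h h' : ℝ → ℝ} (hh : IsConvexHullFn f h) (hh' : IsConvexHullFn f h') :
    h = h' :=
  funext fun x => le_antisymm (hh'.2.2 h hh.1 hh.2.1 x) (hh.2.2 h' hh'.1 hh'.2.1 x)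

/-- The hull of `f - g` is the hull of `f^c - g`: adding back the convex `g` shows it lies
below `f^c`, and `f^c - g ≤ f - g` gives maximality. -/
theorem sub_convexOn {f g h₁ h₂ : ℝ → ℝ} (hg : ConvexOn ℝ univ g) (hh₁ : IsConvexHullFn f h₁)
    (hh₂ : IsConvexHullFn (fun x => f x - g x) h₂) :
    IsConvexHullFn (fun x => h₁ x - g x) h₂ := by
  obtain ⟨h₂_convex, h₂_le, h₂_max⟩ := hh₂
  have h₂_add_le : ∀ x, h₂ x + g x ≤ h₁ x :=
    hh₁.2.2 _ (h₂_convex.add hg) fun y => le_sub_iff_add_le.mp (h₂_le y)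
  refine ⟨h₂_convex, fun x => le_sub_iff_add_le.mpr (h₂_add_le x), fun k hk hk_le => ?_⟩
  exact h₂_max k hk fun x => (hk_le x).trans (sub_le_sub_right (hh₁.2.1 x) _)

end IsConvexHullFn

/-- Lemma 2.9: `(f - g)^c = (f^c - g)^c` for `g` convex. -/
theorem convexHull_sub_convex_eq
    (f g h₁ h₂ h₃ : ℝ → ℝ) (hg : ConvexOn ℝ Set.univ g)
    (hh₁ : IsConvexHullFn f h₁)
    (hh₂ : IsConvexHullFn (fun x => f x - g x) h₂)
    (hh₃ : IsConvexHullFn (fun x => h₁ x - g x) h₃) :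
    h₂ = h₃ :=
  (IsConvexHullFn.sub_convexOn hg hh₁ hh₂).unique hh₃
end
end

section
/- Let α, a ≥ 0 and β, b ∈ ℝ, and let f ∈ 𝒟(α,β) and g ∈ 𝒟(a,b) with g(k) ≥ f(k) for all k ∈ ℝ. Then: (i) α ≤ a; (ii) if α = a then β ≥ b; (iii) the quantity η = sup_{k∈ℝ} ( (a−α)k − (b−β) − g(k) + f(k) ) satisfies 0 ≤ η < ∞; and (iv) if h : ℝ → ℝ is the convex hull of g − f, then h ∈ 𝒟(a−α, b−β+η). -/
open MeasureTheory Set Filter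

noncomputable section

/-! With `d = g - f ≥ 0` and `L k = (a - α) k - (b - β)`, the function `L - d` tends to `0` at
`+∞` and lies below `L`; this forces `α ≤ a`, makes `η = sup (L - d)` finite and nonnegative,
and gives `b ≤ β` when `L` is constant. The affine function `L - η` lies below `d`, hence below
the hull `h ≤ d`, so `ψ = h - (L - η)` is a nonnegative convex function, bounded above at `+∞`
and therefore antitone. Its limit at `+∞` is its infimum `m`, and `m > 0` would give
`L - η + m ≤ h ≤ d`, contradicting the choice of `η`. -/

open Topology

theorem convexOn_univ_affine (c e : ℝ) : ConvexOn ℝ univ fun x : ℝ => c * x + e := by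
  refine ⟨convex_univ, fun x _ y _ p q _ _ hpq => le_of_eq ?_⟩
  simp only [smul_eq_mul]
  linear_combination (-e) * hpq

namespace ConvexOn

variable {ψ : ℝ → ℝ}

theorem tendsto_atTop_atTop_of_lt (hψ : ConvexOn ℝ univ ψ) {x y : ℝ} (hxy : x < y)
    (hlt : ψ x < ψ y) : Tendsto ψ atTop atTop := by
  set s := (ψ y - ψ x) / (y - x)
  have hs : 0 < s := div_pos (sub_pos.2 hlt) (sub_pos.2 hxy)
  have hline : Tendsto (fun w => s * w + (ψ y - s * y)) atTop atTop :=
    tendsto_atTop_add_const_right _ _ (tendsto_id.const_mul_atTop hs)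
  refine tendsto_atTop_mono' _ ?_ hline
  filter_upwards [eventually_gt_atTop y] with w hw
  have hslope : s ≤ (ψ w - ψ y) / (w - y) :=
    hψ.slope_mono_adjacent (mem_univ x) (mem_univ w) hxy hw
  rw [le_div_iff₀ (sub_pos.2 hw)] at hslope
  linarith

theorem antitone_of_not_tendsto_atTop (hψ : ConvexOn ℝ univ ψ)
    (hnot : ¬Tendsto ψ atTop atTop) : Antitone ψ := by
  intro x y hxy
  rcases hxy.eq_or_lt with rfl | hxy
  · exact le_rfl
  exact not_lt.1 fun hlt => hnot (hψ.tendsto_atTop_atTop_of_lt hxy hlt)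

theorem monotone_of_not_tendsto_atBot (hψ : ConvexOn ℝ univ ψ)
    (hnot : ¬Tendsto ψ atBot atTop) : Monotone ψ := by
  have hrefl : ConvexOn ℝ univ fun x => ψ (-x) := by
    refine ⟨convex_univ, fun x _ y _ p q hp hq hpq => ?_⟩
    simpa only [smul_neg, neg_add] using hψ.2 (mem_univ (-x)) (mem_univ (-y)) hp hq hpq
  have hanti := hrefl.antitone_of_not_tendsto_atTop fun h => hnot <| by
    simpa only [Function.comp_def, neg_neg] using h.comp tendsto_neg_atBot_atTop
  intro x y hxy
  simpa using hanti (neg_le_neg hxy)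

end ConvexOn

section AffineMinorant

variable {φ : ℝ → ℝ} {c e : ℝ}

theorem nonneg_of_tendsto_of_le_affine (hle : ∀ k, φ k ≤ c * k - e)
    (htop : Tendsto φ atTop (𝓝 0)) : 0 ≤ c := by
  by_contra! hc
  have hline : Tendsto (fun k => c * k - e) atTop atBot :=
    tendsto_atBot_add_const_right _ _ (tendsto_id.const_mul_atTop_of_neg hc)
  exact not_tendsto_atBot_of_tendsto_nhds htop (tendsto_atBot_mono hle hline)

theorem exists_nonneg_isLUB_of_le_affine (hc : 0 ≤ c) (hle : ∀ k, φ k ≤ c * k - e)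
    (htop : Tendsto φ atTop (𝓝 0)) : ∃ η, 0 ≤ η ∧ IsLUB (range φ) η := by
  obtain ⟨N, hN⟩ := eventually_atTop.1 (htop.eventually (eventually_le_nhds one_pos))
  have hbdd : BddAbove (range φ) := by
    refine ⟨max (c * N - e) 1, forall_mem_range.2 fun k => ?_⟩
    rcases le_total N k with hk | hk
    · exact le_max_of_le_right (hN k hk)
    · exact le_max_of_le_left ((hle k).trans (by gcongr))
  exact ⟨sSup (range φ), le_of_tendsto' htop fun k => le_csSup hbdd (mem_range_self k),
    isLUB_csSup (range_nonempty φ) hbdd⟩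

end AffineMinorant

theorem IsConvexHullFn.memD {d h : ℝ → ℝ} {c e η : ℝ} (hh : IsConvexHullFn d h)
    (hd0 : ∀ k, 0 ≤ d k) (hdbot : Tendsto d atBot (𝓝 0))
    (htop : Tendsto (fun k => c * k - e - d k) atTop (𝓝 0))
    (hη : IsLUB (range fun k => c * k - e - d k) η) : MemD c (e + η) h := by
  obtain ⟨hconv, hle, hmax⟩ := hh
  have h0 : ∀ k, 0 ≤ h k := hmax _ (convexOn_const 0 convex_univ) hd0
  have hbot : Tendsto h atBot (𝓝 0) :=
    tendsto_of_tendsto_of_tendsto_of_le_of_le tendsto_const_nhds hdbot h0 hle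
  set ψ := fun k => h k - (c * k - (e + η)) with hψ
  have hψ0 : ∀ k, 0 ≤ ψ k := by
    have hline := hmax _ (convexOn_univ_affine c (-(e + η))) fun k => by
      linarith [hη.1 (mem_range_self k)]
    intro k
    linarith [hline k]
  have hψle : ∀ k, ψ k ≤ η - (c * k - e - d k) := fun k => by linarith [hle k]
  have hψconv : ConvexOn ℝ univ ψ := by
    have hsum : ψ = h + fun k => -c * k + (e + η) := by
      funext k
      simp only [hψ, Pi.add_apply]
      ring
    exact hsum ▸ hconv.add (convexOn_univ_affine (-c) (e + η))
  have hψanti : Antitone ψ := hψconv.antitone_of_not_tendsto_atTop fun hψtop =>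
    not_tendsto_atTop_of_tendsto_nhds (tendsto_const_nhds.sub htop)
      (tendsto_atTop_mono hψle hψtop)
  have hψbdd : BddBelow (range ψ) := ⟨0, forall_mem_range.2 hψ0⟩
  have hψinf : ⨅ k, ψ k = 0 := by
    refine le_antisymm ?_ (le_ciInf hψ0)
    have := hη.2 (forall_mem_range.2 fun k => (le_sub_comm.1 (hψle k)).trans
      (sub_le_sub_left (ciInf_le hψbdd k) η))
    linarith
  refine ⟨h0, hconv.monotone_of_not_tendsto_atBot (not_tendsto_atTop_of_tendsto_nhds hbot),
    hconv, hbot, ?_⟩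
  simpa only [hψinf] using tendsto_atTop_ciInf hψanti hψbdd

theorem MemD.tendsto_sub {α β a b : ℝ} {f g : ℝ → ℝ} (hf : MemD α β f)
    (hg : MemD a b g) :
    Tendsto (fun k => (a - α) * k - (b - β) - (g k - f k)) atTop (𝓝 0) := by
  have := hf.2.2.2.2.sub hg.2.2.2.2
  rw [sub_zero] at this
  exact this.congr fun k => by ring

theorem convexHull_memD_general
    (α a β b : ℝ)
    (f g : ℝ → ℝ) (hf : MemD α β f) (hg : MemD a b g)
    (hge : ∀ k : ℝ, f k ≤ g k)
    (h : ℝ → ℝ) (hh : IsConvexHullFn (fun k => g k - f k) h) :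
    α ≤ a ∧ (α = a → b ≤ β) ∧
    ∃ η : ℝ, 0 ≤ η ∧
      IsLUB (Set.range fun k : ℝ => (a - α) * k - (b - β) - g k + f k) η ∧
      MemD (a - α) (b - β + η) h := by
  have hd0 : ∀ k, 0 ≤ g k - f k := fun k => sub_nonneg.2 (hge k)
  have hdbot : Tendsto (fun k => g k - f k) atBot (𝓝 0) := by
    simpa only [sub_zero] using hg.2.2.2.1.sub hf.2.2.2.1
  have htop := hf.tendsto_sub hg
  have hle : ∀ k, (a - α) * k - (b - β) - (g k - f k) ≤ (a - α) * k - (b - β) :=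
    fun k => sub_le_self _ (hd0 k)
  have hαa : α ≤ a := sub_nonneg.1 (nonneg_of_tendsto_of_le_affine hle htop)
  obtain ⟨η, hη0, hη⟩ := exists_nonneg_isLUB_of_le_affine (sub_nonneg.2 hαa) hle htop
  have hrange : (fun k => (a - α) * k - (b - β) - g k + f k) =
      fun k => (a - α) * k - (b - β) - (g k - f k) := funext fun k => by ring
  refine ⟨hαa, fun hαa' => ?_, η, hη0, hrange ▸ hη, hh.memD hd0 hdbot htop hη⟩
  subst hαa'
  have hconst : ∀ k, (α - α) * k - (b - β) - (g k - f k) ≤ β - b :=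
    fun k => (hle k).trans_eq (by ring)
  linarith [le_of_tendsto' htop hconst]

/-- Lemma 2.10: behaviour of the convex hull of a difference of functions in
the classes `𝒟(α,β)` and `𝒟(a,b)`. -/
theorem convexHull_memD
    (α a β b : ℝ) (hα : 0 ≤ α) (ha : 0 ≤ a)
    (f g : ℝ → ℝ) (hf : MemD α β f) (hg : MemD a b g)
    (hge : ∀ k : ℝ, f k ≤ g k)
    (h : ℝ → ℝ) (hh : IsConvexHullFn (fun k => g k - f k) h) :
    α ≤ a ∧ (α = a → b ≤ β) ∧
    ∃ η : ℝ, 0 ≤ η ∧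
      IsLUB (Set.range fun k : ℝ => (a - α) * k - (b - β) - g k + f k) η ∧
      MemD (a - α) (b - β + η) h :=
  convexHull_memD_general α a β b f g hf hg hge h hh
end
end

section
/- Let μ, ν ∈ 𝓜 with μ ≤_pcd ν. Then there exists a unique measure θ ∈ 𝓜 such that: (i) μ ≤_cd θ; (ii) θ(A) ≤ ν(A) for every Borel set A ⊆ ℝ; and (iii) for every η ∈ 𝓜 with μ ≤_cd η and η(A) ≤ ν(A) for all Borel A, one has η ≤_cd θ. -/
open MeasureTheory Set Filter

noncomputable section

/-!
With `m = μ(ℝ)`, the maximal element is the leftmost part `θ` of `ν` of mass `m`: the restriction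
of `ν` to `(-∞, q)` plus an atom at a quantile `q`. If `ρ ≤_pcd ν` has mass `m` and `f` is convex
non-increasing, then `max f (f q) - f q` is admissible for `≤_pcd` and vanishes on `[q, ∞)`, which
gives `∫ f dρ ≤ ∫ f dθ`; both `μ` and every `η ≤ ν` with `μ ≤_cd η` are such a `ρ`. Uniqueness holds
because `≤_cd` is antisymmetric on `𝓜`: the put potential `k ↦ ∫ (k - x)⁺ dθ` determines `θ`, its
right derivative being `k ↦ θ(-∞, k]`.
-/

open scoped Topology

lemma convexOn_posPart_sub (k : ℝ) : ConvexOn ℝ univ fun x : ℝ => max (k - x) 0 :=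
  ((convexOn_const k convex_univ).sub (concaveOn_id convex_univ)).sup
    (convexOn_const 0 convex_univ)

lemma antitone_posPart_sub (k : ℝ) : Antitone fun x : ℝ => max (k - x) 0 :=
  fun _ _ hxy => max_le_max (sub_le_sub_left hxy k) le_rfl

lemma MemM.integrable_posPart_sub {θ : Measure ℝ} (hθ : MemM θ) (k : ℝ) :
    Integrable (fun x => max (k - x) 0) θ :=
  haveI := hθ.1
  ((integrable_const k).sub hθ.2).pos_part

lemma MemM.mono {θ ν : Measure ℝ} (hν : MemM ν) (hle : θ ≤ ν) : MemM θ :=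
  haveI := hν.1
  ⟨isFiniteMeasure_of_le ν hle, hν.2.mono_measure hle⟩

lemma MemM.hasDerivWithinAt_Ppot {θ : Measure ℝ} (hθ : MemM θ) (k : ℝ) :
    HasDerivWithinAt (Ppot θ) (θ.real (Iic k)) (Ioi k) k := by
  have := hθ.1
  have hslope : slope (Ppot θ) k =
      fun t => ∫ x, (t - k)⁻¹ * (max (t - x) 0 - max (k - x) 0) ∂θ := funext fun t => by
    rw [slope_def_field, Ppot, Ppot, integral_const_mul,
      integral_sub (hθ.integrable_posPart_sub t) (hθ.integrable_posPart_sub k), div_eq_inv_mul]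
  rw [hasDerivWithinAt_iff_tendsto_slope, sdiff_singleton_eq_self self_notMem_Ioi, hslope,
    ← integral_indicator_one measurableSet_Iic]
  refine tendsto_integral_filter_of_dominated_convergence (fun _ => 1) ?_ ?_
    (integrable_const 1) (ae_of_all _ fun x => ?_)
  · exact Eventually.of_forall fun t => (measurable_const.mul
      ((antitone_posPart_sub t).measurable.sub
        (antitone_posPart_sub k).measurable)).aestronglyMeasurable
  · filter_upwards [self_mem_nhdsWithin] with t (ht : k < t)
    refine ae_of_all _ fun x => ?_
    have hbound := abs_max_sub_max_le_abs (t - x) (k - x) 0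
    rw [sub_sub_sub_cancel_right, abs_of_pos (sub_pos.2 ht)] at hbound
    rw [norm_mul, norm_inv, Real.norm_eq_abs, Real.norm_eq_abs, abs_of_pos (sub_pos.2 ht)]
    calc (t - k)⁻¹ * |max (t - x) 0 - max (k - x) 0| ≤ (t - k)⁻¹ * (t - k) := by gcongr
      _ = 1 := inv_mul_cancel₀ (sub_pos.2 ht).ne'
  · rcases le_or_gt x k with hxk | hkx
    · rw [indicator_of_mem (mem_Iic.2 hxk), Pi.one_apply]
      refine tendsto_const_nhds.congr' ?_
      filter_upwards [self_mem_nhdsWithin] with t (ht : k < t)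
      rw [max_eq_left (by linarith), max_eq_left (by linarith), sub_sub_sub_cancel_right,
        inv_mul_cancel₀ (sub_pos.2 ht).ne']
    · rw [indicator_of_notMem (notMem_Iic.2 hkx)]
      refine tendsto_const_nhds.congr' ?_
      filter_upwards [nhdsWithin_le_nhds (eventually_lt_nhds hkx)] with t (ht : t < x)
      rw [max_eq_right (by linarith), max_eq_right (by linarith), sub_self, mul_zero]

lemma Measure.ext_of_Ppot_eq {θ₁ θ₂ : Measure ℝ} (h₁ : MemM θ₁) (h₂ : MemM θ₂)
    (h : Ppot θ₁ = Ppot θ₂) : θ₁ = θ₂ := by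
  have := h₁.1
  have := h₂.1
  refine Measure.ext_of_Iic θ₁ θ₂ fun k => ?_
  have hderiv := (uniqueDiffWithinAt_Ioi k).eq_deriv _ (h₁.hasDerivWithinAt_Ppot k)
    (h ▸ h₂.hasDerivWithinAt_Ppot k)
  rwa [measureReal_def, measureReal_def, ENNReal.toReal_eq_toReal_iff' (measure_ne_top _ _)
    (measure_ne_top _ _)] at hderiv

lemma LeCD.Ppot_le {η χ : Measure ℝ} (h : LeCD η χ) (hη : MemM η) (hχ : MemM χ) (k : ℝ) :
    Ppot η k ≤ Ppot χ k :=
  h _ (convexOn_posPart_sub k) (antitone_posPart_sub k) (hη.integrable_posPart_sub k)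
    (hχ.integrable_posPart_sub k)

lemma LeCD.antisymm {θ₁ θ₂ : Measure ℝ} (h₁₂ : LeCD θ₁ θ₂) (h₂₁ : LeCD θ₂ θ₁) (h₁ : MemM θ₁)
    (h₂ : MemM θ₂) : θ₁ = θ₂ :=
  Measure.ext_of_Ppot_eq h₁ h₂ <| funext fun k =>
    (h₁₂.Ppot_le h₁ h₂ k).antisymm (h₂₁.Ppot_le h₂ h₁ k)

lemma LeCD.real_univ_eq {η χ : Measure ℝ} [IsFiniteMeasure η] [IsFiniteMeasure χ]
    (h : LeCD η χ) : η.real univ = χ.real univ := by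
  have h₁ := h (fun _ => 1) (convexOn_const 1 convex_univ) antitone_const
    (integrable_const 1) (integrable_const 1)
  have h₂ := h (fun _ => -1) (convexOn_const (-1) convex_univ) antitone_const
    (integrable_const (-1)) (integrable_const (-1))
  simp only [integral_const, smul_eq_mul, mul_one, mul_neg] at h₁ h₂
  linarith

lemma lePCD_of_le {η ν : Measure ℝ} (h : η ≤ ν) : LePCD η ν :=
  fun _ hf _ _ _ hfν => integral_mono_measure h (ae_of_all _ hf) hfν

lemma LePCD.real_univ_le {ρ ν : Measure ℝ} [IsFiniteMeasure ρ] [IsFiniteMeasure ν]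
    (h : LePCD ρ ν) : ρ.real univ ≤ ν.real univ := by
  simpa using h (fun _ => 1) (fun _ => zero_le_one) (convexOn_const 1 convex_univ)
    antitone_const (integrable_const 1) (integrable_const 1)

/-- Truncating `f` from below at level `c` gives a nonnegative convex non-increasing function. -/
lemma LePCD.integral_le_integral_max {ρ ν : Measure ℝ} [IsFiniteMeasure ρ] [IsFiniteMeasure ν]
    (h : LePCD ρ ν) {f : ℝ → ℝ} (hconv : ConvexOn ℝ univ f) (hanti : Antitone f)
    (hfρ : Integrable f ρ) (c : ℝ) (hfν : Integrable (fun x => max (f x) c) ν) :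
    ∫ x, f x ∂ρ ≤ ∫ x, max (f x) c ∂ν + (ρ.real univ - ν.real univ) * c := by
  have hmaxρ : Integrable (fun x => max (f x) c) ρ := hfρ.sup (integrable_const c)
  have htrunc := h (fun x => max (f x) c - c) (fun x => sub_nonneg.2 (le_max_right _ _))
    ((hconv.sup (convexOn_const c convex_univ)).sub (concaveOn_const c convex_univ))
    (fun x y hxy => sub_le_sub_right (max_le_max (hanti hxy) le_rfl) c)
    (hmaxρ.sub (integrable_const c)) (hfν.sub (integrable_const c))
  rw [integral_sub hmaxρ (integrable_const c), integral_sub hfν (integrable_const c),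
    integral_const, integral_const, smul_eq_mul, smul_eq_mul] at htrunc
  have hmono : ∫ x, f x ∂ρ ≤ ∫ x, max (f x) c ∂ρ :=
    integral_mono hfρ hmaxρ fun x => le_max_left _ _
  linarith

lemma LePCD.leCD_of_real_univ_eq {ρ ν : Measure ℝ} [IsFiniteMeasure ρ] [IsFiniteMeasure ν]
    (h : LePCD ρ ν) (hmass : ρ.real univ = ν.real univ) : LeCD ρ ν := by
  intro f hconv hanti hfρ hfν
  have hmaxν : ∀ n : ℕ, Integrable (fun x => max (f x) (f n)) ν :=
    fun n => hfν.sup (integrable_const _)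
  have hlim : Tendsto (fun n : ℕ => ∫ x, max (f x) (f n) ∂ν) atTop (𝓝 (∫ x, f x ∂ν)) := by
    refine integral_tendsto_of_tendsto_of_antitone hmaxν hfν (ae_of_all _ fun x n m hnm => ?_)
      (ae_of_all _ fun x => ?_)
    · exact max_le_max le_rfl (hanti (Nat.cast_le.2 hnm))
    · refine tendsto_const_nhds.congr' ?_
      filter_upwards [(tendsto_natCast_atTop_atTop (R := ℝ)).eventually_ge_atTop x] with n hn
      exact (max_eq_left (hanti hn)).symm
  refine ge_of_tendsto hlim (Eventually.of_forall fun n => ?_)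
  simpa [hmass] using h.integral_le_integral_max hconv hanti hfρ (f n) (hmaxν n)

/-- The part of `ν` of mass `m` lying furthest to the left, when `ν (Iio q) ≤ m ≤ ν (Iic q)`. -/
def leftPart (ν : Measure ℝ) (q m : ℝ) : Measure ℝ :=
  ν.restrict (Iio q) + ENNReal.ofReal (m - ν.real (Iio q)) • Measure.dirac q

lemma leftPart_le {ν : Measure ℝ} [IsFiniteMeasure ν] {q m : ℝ} (hm : m ≤ ν.real (Iic q)) :
    leftPart ν q m ≤ ν := by
  have hatom : ENNReal.ofReal (m - ν.real (Iio q)) ≤ ν {q} := by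
    rw [← Iio_union_right, measureReal_union (by simp) (measurableSet_singleton q)] at hm
    exact ENNReal.ofReal_le_of_le_toReal (by rw [← measureReal_def]; linarith)
  calc leftPart ν q m ≤ ν.restrict (Iio q) + ν {q} • Measure.dirac q := by
        unfold leftPart; gcongr
    _ = ν.restrict (Iic q) := by
        rw [← Measure.restrict_singleton, ← Measure.restrict_union (by simp)
          (measurableSet_singleton q), Iio_union_right]
    _ ≤ ν := Measure.restrict_le_self

lemma integral_leftPart {ν : Measure ℝ} {q m : ℝ} (hm : ν.real (Iio q) ≤ m) {f : ℝ → ℝ}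
    (hf : Integrable f (leftPart ν q m)) :
    ∫ x, f x ∂(leftPart ν q m) = ∫ x in Iio q, f x ∂ν + (m - ν.real (Iio q)) * f q := by
  obtain ⟨hfν, hfδ⟩ := integrable_add_measure.1 hf
  rw [leftPart, integral_add_measure hfν hfδ, integral_smul_measure, integral_dirac,
    ENNReal.toReal_ofReal (sub_nonneg.2 hm), smul_eq_mul]

lemma LePCD.leCD_leftPart {ρ ν : Measure ℝ} [IsFiniteMeasure ρ] [IsFiniteMeasure ν]
    (h : LePCD ρ ν) {q m : ℝ} (hmass : ρ.real univ = m) (hm : ν.real (Iio q) ≤ m) :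
    LeCD ρ (leftPart ν q m) := by
  intro f hconv hanti hfρ hfθ
  have hfIio : IntegrableOn f (Iio q) ν := (integrable_add_measure.1 hfθ).1
  have hmax_Iio : EqOn (fun x => max (f x) (f q)) f (Iio q) :=
    fun x hx => max_eq_left (hanti (le_of_lt hx))
  have hmax_Ici : EqOn (fun x => max (f x) (f q)) (fun _ => f q) (Ici q) :=
    fun x hx => max_eq_right (hanti hx)
  have hmaxν : Integrable (fun x => max (f x) (f q)) ν := by
    rw [← integrableOn_univ, ← Iio_union_Ici]
    exact (hfIio.congr_fun hmax_Iio.symm measurableSet_Iio).union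
      ((integrableOn_const (measure_ne_top _ _)).congr_fun hmax_Ici.symm measurableSet_Ici)
  have hsplit : ∫ x, max (f x) (f q) ∂ν = ∫ x in Iio q, f x ∂ν + ν.real (Ici q) * f q := by
    rw [← integral_add_compl measurableSet_Iio hmaxν, compl_Iio,
      setIntegral_congr_fun measurableSet_Iio hmax_Iio,
      setIntegral_congr_fun measurableSet_Ici hmax_Ici, setIntegral_const, smul_eq_mul]
  have hν := measureReal_add_measureReal_compl (μ := ν) (measurableSet_Iio (a := q))
  rw [compl_Iio] at hν
  have key := h.integral_le_integral_max hconv hanti hfρ (f q) hmaxν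
  rw [integral_leftPart hm hfθ]
  rw [hsplit, hmass, ← hν] at key
  linarith

lemma exists_measure_Iio_le_le_measure_Iic (ν : Measure ℝ) [IsFiniteMeasure ν] {c : ENNReal}
    (hc₀ : 0 < c) (hc : c < ν univ) : ∃ q, ν (Iio q) ≤ c ∧ c ≤ ν (Iic q) := by
  set S := {t : ℝ | c ≤ ν (Iic t)}
  have hS : S.Nonempty := ((tendsto_measure_Iic_atTop ν).eventually (eventually_ge_nhds hc)).exists
  have hSb : BddBelow S := by
    have hempty : ⋂ t : ℝ, Iic t = ∅ := eq_empty_of_forall_notMem fun x hx =>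
      by linarith [mem_Iic.1 (mem_iInter.1 hx (x - 1))]
    have hbot : Tendsto (fun t => ν (Iic t)) atBot (𝓝 0) := by
      simpa [hempty, Function.comp_def] using tendsto_measure_iInter_atBot
        (fun _ => measurableSet_Iic.nullMeasurableSet) monotone_Iic ⟨0, measure_ne_top ν _⟩
    obtain ⟨b, hb⟩ := (hbot.eventually (eventually_lt_nhds hc₀)).exists_forall_of_atBot
    exact ⟨b, fun t ht => le_of_not_gt fun htb => (hb t htb.le).not_ge ht⟩
  refine ⟨sInf S, ?_, ?_⟩
  · obtain ⟨u, hu_mono, hu_lt, hu_lim⟩ := exists_seq_strictMono_tendsto (sInf S)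
    rw [← iUnion_Iic_eq_Iio_of_lt_of_tendsto hu_lt hu_lim]
    refine le_of_tendsto' (tendsto_measure_iUnion_atTop (monotone_Iic.comp hu_mono.monotone))
      fun n => ?_
    exact (not_le.1 (notMem_of_lt_csInf (s := S) (hu_lt n) hSb)).le
  · have hright := tendsto_measure_biInter_gt (μ := ν) (s := Iic) (a := sInf S)
      (fun _ _ => measurableSet_Iic.nullMeasurableSet) (fun _ _ _ hij => Iic_subset_Iic.2 hij)
      ⟨sInf S + 1, by linarith, measure_ne_top ν _⟩
    have hinter : ⋂ r > sInf S, Iic r = Iic (sInf S) := by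
      ext x
      simpa using ⟨le_of_forall_gt_imp_ge_of_dense, fun hx r hr => hx.trans hr.le⟩
    rw [hinter] at hright
    refine ge_of_tendsto hright (eventually_nhdsWithin_of_forall fun r hr => ?_)
    obtain ⟨t, htS, htr⟩ := exists_lt_of_csInf_lt hS hr
    exact htS.trans (measure_mono (Iic_subset_Iic.2 htr.le))

lemma exists_leCD_majorant_le {ν : Measure ℝ} (hν : MemM ν) {m : ℝ} (hm₀ : 0 ≤ m)
    (hm : m ≤ ν.real univ) : ∃ θ, MemM θ ∧ θ ≤ ν ∧
      ∀ ρ : Measure ℝ, [IsFiniteMeasure ρ] → LePCD ρ ν → ρ.real univ = m → LeCD ρ θ := by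
  have := hν.1
  rcases hm₀.eq_or_lt with rfl | hm₀
  · refine ⟨0, hν.mono (Measure.zero_le ν), Measure.zero_le ν, fun ρ _ _ hρ => ?_⟩
    rw [measureReal_eq_zero_iff, Measure.measure_univ_eq_zero] at hρ
    subst hρ
    exact fun _ _ _ _ _ => le_rfl
  rcases hm.eq_or_lt with rfl | hm
  · exact ⟨ν, hν, le_rfl, fun ρ _ hρν hρ => hρν.leCD_of_real_univ_eq hρ⟩
  obtain ⟨q, hq₁, hq₂⟩ := exists_measure_Iio_le_le_measure_Iic ν (ENNReal.ofReal_pos.2 hm₀)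
    ((ENNReal.ofReal_lt_iff_lt_toReal hm₀.le (measure_ne_top ν _)).2 hm)
  have hle := leftPart_le ((ENNReal.ofReal_le_iff_le_toReal (measure_ne_top ν _)).1 hq₂)
  exact ⟨leftPart ν q m, hν.mono hle, hle, fun ρ _ hρν hρ =>
    hρν.leCD_leftPart hρ (ENNReal.toReal_le_of_le_ofReal hm₀.le hq₁)⟩

/-- Proposition 3.1: existence and uniqueness of the maximal element `T^ν(μ)`
of `{η : μ ≤_cd η ≤ ν}` with respect to `≤_cd`. -/
theorem maximal_element_exists_unique
    (μ ν : MeasureTheory.Measure ℝ) (hμ : MemM μ) (hν : MemM ν)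
    (hpcd : LePCD μ ν) :
    ∃! θ : MeasureTheory.Measure ℝ, MemM θ ∧ LeCD μ θ ∧
      (∀ A : Set ℝ, MeasurableSet A → θ A ≤ ν A) ∧
      (∀ η : MeasureTheory.Measure ℝ, MemM η → LeCD μ η →
        (∀ A : Set ℝ, MeasurableSet A → η A ≤ ν A) → LeCD η θ) := by
  have := hμ.1
  have := hν.1
  obtain ⟨θ, hθ, hθν, hθ_max⟩ :=
    exists_leCD_majorant_le hν measureReal_nonneg hpcd.real_univ_le
  have hθ_ge : ∀ η, MemM η → LeCD μ η → (∀ A, MeasurableSet A → η A ≤ ν A) → LeCD η θ :=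
    fun η hη hμη hην =>
      have := hη.1
      hθ_max η (lePCD_of_le (Measure.le_iff.2 hην)) hμη.real_univ_eq.symm
  refine ⟨θ, ⟨hθ, hθ_max μ hpcd rfl, fun A _ => hθν A, hθ_ge⟩, ?_⟩
  rintro θ' ⟨hθ', hμθ', hθ'ν, hθ'_max⟩
  exact (hθ_ge θ' hθ' hμθ' hθ'ν).antisymm (hθ'_max θ hθ (hθ_max μ hpcd rfl) fun A _ => hθν A)
    hθ' hθ
end
end

section
/- Let μ, ν ∈ 𝓜 with μ ≤_pcd ν. Then μ ≤_pc ν if and only if C_μ(k) ≤ C_ν(k) for all k ∈ ℝ. -/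
open MeasureTheory Set Filter

noncomputable section

/-!
The forward direction tests `≤_pc` on the calls `x ↦ (x - k)⁺`. Conversely, a nonnegative convex
`f` splits at a minimum point as `g + h`, where `g` is convex, nonnegative and non-increasing, so
`≤_pcd` applies to it, and `h` is convex, non-decreasing and vanishes at `-∞`. Such an `h` is the
pointwise limit from below of nonnegative combinations of calls (shifted piecewise-linear
interpolants on finer and wider grids), so `C_μ ≤ C_ν` and dominated convergence give
`∫ h dμ ≤ ∫ h dν`.
-/

open scoped Topology

section Decomposition

variable {f : ℝ → ℝ} {c : ℝ}

lemma ConvexOn.comp_min_const (hf : ConvexOn ℝ (Iic c) f) (hanti : AntitoneOn f (Iic c)) :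
    ConvexOn ℝ univ (fun x => f (min x c)) := by
  have himage : (fun x => min x c) '' univ = Iic c :=
    Set.ext fun y => ⟨by rintro ⟨x, -, rfl⟩; exact min_le_right x c,
      fun hy => ⟨y, mem_univ y, min_eq_left hy⟩⟩
  rw [← himage] at hf hanti
  exact hf.comp_concaveOn ((concaveOn_id convex_univ).inf (concaveOn_const c convex_univ)) hanti

lemma ConvexOn.comp_max_const (hf : ConvexOn ℝ (Ici c) f) (hmono : MonotoneOn f (Ici c)) :
    ConvexOn ℝ univ (fun x => f (max x c)) := by
  have himage : (fun x => max x c) '' univ = Ici c :=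
    Set.ext fun y => ⟨by rintro ⟨x, -, rfl⟩; exact le_max_right x c,
      fun hy => ⟨y, mem_univ y, max_eq_left hy⟩⟩
  rw [← himage] at hf hmono
  exact hf.comp ((convexOn_id convex_univ).sup (convexOn_const c convex_univ)) hmono

lemma ConvexOn.antitoneOn_Iic_of_forall_le (hf : ConvexOn ℝ univ f) (hc : ∀ x, f c ≤ f x) :
    AntitoneOn f (Iic c) := fun x _ y hy hxy =>
  (eq_or_lt_of_le hy).elim (fun hyc => by rw [hyc]; exact hc x) fun hyc =>
    hf.le_left_of_right_le'' (mem_univ x) (mem_univ c) hxy hyc (hc y)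

lemma ConvexOn.monotoneOn_Ici_of_forall_le (hf : ConvexOn ℝ univ f) (hc : ∀ x, f c ≤ f x) :
    MonotoneOn f (Ici c) := fun x hx y _ hxy =>
  (eq_or_lt_of_le hx).elim (fun hcx => by rw [← hcx]; exact hc y) fun hcx =>
    hf.le_right_of_left_le'' (mem_univ c) (mem_univ y) hcx hxy (hc x)

lemma ConvexOn.exists_forall_le_of_not_monotone_of_not_antitone (hf : ConvexOn ℝ univ f)
    (hm : ¬Monotone f) (ha : ¬Antitone f) : ∃ c, ∀ x, f c ≤ f x := by
  simp only [Monotone, Antitone, not_forall, not_le] at hm ha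
  obtain ⟨u, v, huv, hfuv⟩ := hm
  obtain ⟨a, b, hab, hfab⟩ := ha
  replace huv := huv.lt_of_ne (by rintro rfl; exact lt_irrefl _ hfuv)
  replace hab := hab.lt_of_ne (by rintro rfl; exact lt_irrefl _ hfab)
  have hdecr := hf.strictAntiOn (mem_univ v) huv hfuv
  have hincr := hf.strictMonoOn (mem_univ a) hab hfab
  have hub : u < b := lt_of_not_ge fun hbu =>
    (hincr ⟨mem_univ u, hbu⟩ ⟨mem_univ v, hbu.trans huv.le⟩ huv).not_gt hfuv
  obtain ⟨c, hc, hcmin⟩ := isCompact_Icc.exists_isMinOn (nonempty_Icc.2 hub.le)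
    (continuousOn_univ.1 (hf.continuousOn isOpen_univ)).continuousOn
  refine ⟨c, fun x => ?_⟩
  rcases le_or_gt x u with hxu | hux
  · exact (hcmin ⟨le_rfl, hub.le⟩).trans
      (hdecr.antitoneOn ⟨mem_univ x, hxu⟩ ⟨mem_univ u, mem_Iic.2 le_rfl⟩ hxu)
  rcases le_or_gt x b with hxb | hbx
  · exact hcmin ⟨hux.le, hxb⟩
  · exact (hcmin ⟨hub.le, le_rfl⟩).trans
      (hincr.monotoneOn ⟨mem_univ b, mem_Ici.2 le_rfl⟩ ⟨mem_univ x, hbx.le⟩ hbx.le)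

/-- Splitting a nonnegative convex `f` at a minimum point (at `-∞` if `f` is monotone, at `+∞` if
it is antitone). -/
lemma ConvexOn.exists_antitone_add_monotone (hf : ConvexOn ℝ univ f) (hf0 : 0 ≤ f) :
    ∃ g h : ℝ → ℝ, f = g + h ∧ 0 ≤ g ∧ g ≤ f ∧ ConvexOn ℝ univ g ∧ Antitone g ∧
      ConvexOn ℝ univ h ∧ Monotone h ∧ Tendsto h atBot (𝓝 0) := by
  by_cases ha : Antitone f
  · exact ⟨f, 0, (add_zero f).symm, hf0, le_rfl, hf, ha, convexOn_const 0 convex_univ,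
      monotone_const, tendsto_const_nhds⟩
  by_cases hm : Monotone f
  · have hbdd : BddBelow (range f) := ⟨0, forall_mem_range.2 hf0⟩
    refine ⟨fun _ => ⨅ x, f x, fun x => f x - ⨅ x, f x, by ext; simp, fun _ => le_ciInf hf0,
      fun x => ciInf_le hbdd x, convexOn_const _ convex_univ, antitone_const,
      hf.sub (concaveOn_const _ convex_univ), fun x y hxy => sub_le_sub_right (hm hxy) _, ?_⟩
    simpa using (tendsto_atBot_ciInf hm hbdd).sub_const (⨅ x, f x)
  obtain ⟨c, hc⟩ := hf.exists_forall_le_of_not_monotone_of_not_antitone hm ha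
  have hanti := hf.antitoneOn_Iic_of_forall_le hc
  have hmono := hf.monotoneOn_Ici_of_forall_le hc
  refine ⟨fun x => f (min x c), fun x => f (max x c) - f c, ?_, fun x => hf0 (min x c),
    fun x => ?_,
    (hf.subset (subset_univ _) (convex_Iic c)).comp_min_const hanti,
    fun x y hxy => hanti (min_le_right x c) (min_le_right y c) (min_le_min_right c hxy),
    ((hf.subset (subset_univ _) (convex_Ici c)).comp_max_const hmono).sub
      (concaveOn_const _ convex_univ),
    fun x y hxy => sub_le_sub_right
      (hmono (le_max_right x c) (le_max_right y c) (max_le_max_right c hxy)) _, ?_⟩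
  · ext x
    rcases le_total x c with hx | hx <;> simp [hx]
  · rcases le_total x c with hx | hx <;> simp [hx, hc x]
  · refine tendsto_const_nhds.congr' ((eventually_le_atBot c).mono fun x hx => ?_)
    simp [max_eq_right hx]

end Decomposition

section Grid

variable (h : ℝ → ℝ) (m δ : ℝ)

def gridPt (i : ℕ) : ℝ := m + i * δ

def gridSlope (i : ℕ) : ℝ := (h (gridPt m δ (i + 1)) - h (gridPt m δ i)) / δ

def gridWeight : ℕ → ℝ
  | 0 => gridSlope h m δ 0
  | i + 1 => gridSlope h m δ (i + 1) - gridSlope h m δ i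

/-- The piecewise-linear interpolant of `h - h m` at the points `m + iδ`, `i ≤ N`, extended by `0`
on the left and linearly on the right, then shifted right by `δ`: the shift puts it below a
monotone `h`. -/
def gridApprox (N : ℕ) (x : ℝ) : ℝ :=
  ∑ i ∈ Finset.range N, gridWeight h m δ i * max (x - gridPt m δ (i + 1)) 0

variable {h m δ}

lemma gridPt_zero : gridPt m δ 0 = m := by simp [gridPt]

lemma gridPt_succ (i : ℕ) : gridPt m δ (i + 1) = gridPt m δ i + δ := by
  simp only [gridPt]; push_cast; ring

lemma gridSlope_mul (hδ : δ ≠ 0) (i : ℕ) :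
    gridSlope h m δ i * δ = h (gridPt m δ (i + 1)) - h (gridPt m δ i) :=
  div_mul_cancel₀ _ hδ

lemma gridSlope_mono (hδ : 0 < δ) (hconv : ConvexOn ℝ univ h) (i : ℕ) :
    gridSlope h m δ i ≤ gridSlope h m δ (i + 1) := by
  have := hconv.slope_mono_adjacent (mem_univ (gridPt m δ i)) (mem_univ (gridPt m δ (i + 2)))
    (x := gridPt m δ i) (y := gridPt m δ (i + 1)) (z := gridPt m δ (i + 2))
  simpa [gridSlope, gridPt_succ, hδ] using this

lemma gridSlope_nonneg (hδ : 0 < δ) (hmono : Monotone h) (i : ℕ) : 0 ≤ gridSlope h m δ i :=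
  div_nonneg (sub_nonneg.2 (hmono (by simp [gridPt_succ, hδ.le]))) hδ.le

lemma gridWeight_nonneg (hδ : 0 < δ) (hconv : ConvexOn ℝ univ h) (hmono : Monotone h) :
    ∀ i, 0 ≤ gridWeight h m δ i
  | 0 => gridSlope_nonneg hδ hmono 0
  | i + 1 => sub_nonneg.2 (gridSlope_mono hδ hconv i)

lemma gridApprox_nonneg (hδ : 0 < δ) (hconv : ConvexOn ℝ univ h) (hmono : Monotone h)
    (N : ℕ) (x : ℝ) : 0 ≤ gridApprox h m δ N x :=
  Finset.sum_nonneg fun i _ => mul_nonneg (gridWeight_nonneg hδ hconv hmono i) (le_max_right _ _)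

lemma gridApprox_mono (hδ : 0 < δ) (hconv : ConvexOn ℝ univ h) (hmono : Monotone h) (x : ℝ) :
    Monotone (gridApprox h m δ · x) := fun _ _ hNM =>
  Finset.sum_le_sum_of_subset_of_nonneg (Finset.range_subset_range.2 hNM) fun i _ _ =>
    mul_nonneg (gridWeight_nonneg hδ hconv hmono i) (le_max_right _ _)

lemma gridApprox_succ_eq (hδ : 0 < δ) (j : ℕ) {x : ℝ} (hx : gridPt m δ (j + 1) ≤ x) :
    gridApprox h m δ (j + 1) x =
      h (gridPt m δ j) - h m + gridSlope h m δ j * (x - gridPt m δ (j + 1)) := by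
  induction j with
  | zero =>
    simp [gridApprox, gridWeight, gridPt_zero, max_eq_left (sub_nonneg.2 hx)]
  | succ j ih =>
    have hx' : gridPt m δ (j + 1) ≤ x := by
      linarith [gridPt_succ (m := m) (δ := δ) (j + 1)]
    rw [gridApprox, Finset.sum_range_succ, ← gridApprox, ih hx', gridWeight,
      max_eq_left (sub_nonneg.2 hx), gridPt_succ (j + 1)]
    linear_combination gridSlope_mul (h := h) (m := m) hδ.ne' j

lemma gridSlope_mul_le (hδ : 0 < δ) (hconv : ConvexOn ℝ univ h) {j : ℕ} {x : ℝ}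
    (hx : gridPt m δ (j + 1) < x) :
    gridSlope h m δ j * (x - gridPt m δ (j + 1)) ≤ h x - h (gridPt m δ (j + 1)) := by
  have hslope := hconv.slope_mono_adjacent (mem_univ (gridPt m δ j)) (mem_univ x)
    (y := gridPt m δ (j + 1)) (by simp [gridPt_succ, hδ]) hx
  rw [gridPt_succ, add_sub_cancel_left, ← gridPt_succ] at hslope
  exact (le_div_iff₀ (sub_pos.2 hx)).1 hslope

lemma gridApprox_le (hδ : 0 < δ) (hconv : ConvexOn ℝ univ h) (hmono : Monotone h)
    (h0 : ∀ x, 0 ≤ h x) (N : ℕ) (x : ℝ) : gridApprox h m δ N x ≤ h x := by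
  induction N with
  | zero => simpa [gridApprox] using h0 x
  | succ J ih =>
    rcases le_or_gt x (gridPt m δ (J + 1)) with hx | hx
    · rwa [gridApprox, Finset.sum_range_succ, ← gridApprox, max_eq_right (sub_nonpos.2 hx),
        mul_zero, add_zero]
    · rw [gridApprox_succ_eq hδ J hx.le]
      have hstep : gridPt m δ J ≤ gridPt m δ (J + 1) := by rw [gridPt_succ]; linarith
      linarith [gridSlope_mul_le hδ hconv hx, h0 m, hmono hstep]

lemma le_gridApprox (hδ : 0 < δ) (hconv : ConvexOn ℝ univ h) (hmono : Monotone h) {N : ℕ}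
    {x : ℝ} (hx : x ≤ gridPt m δ N) : h (x - 2 * δ) - h m ≤ gridApprox h m δ N x := by
  have hpt (i : ℕ) : gridPt m δ i = m + i * δ := rfl
  rcases lt_or_ge x (gridPt m δ 1) with hx1 | hx1
  · have : x - 2 * δ ≤ m := by rw [hpt, Nat.cast_one, one_mul] at hx1; linarith
    linarith [hmono this, gridApprox_nonneg (m := m) hδ hconv hmono N x]
  -- the grid cell `[gridPt (j + 1), gridPt (j + 2))` containing `x`
  have hx1' : 1 ≤ (x - m) / δ := by
    rw [le_div_iff₀ hδ]; rw [hpt, Nat.cast_one, one_mul] at hx1; linarith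
  obtain ⟨j, hj⟩ : ∃ j, ⌊(x - m) / δ⌋₊ = j + 1 :=
    Nat.exists_eq_add_of_le' (Nat.le_floor (by exact_mod_cast hx1'))
  have hj_le : ((j + 1 : ℕ) : ℝ) ≤ (x - m) / δ := hj ▸ Nat.floor_le (by linarith)
  have hj_lt : (x - m) / δ < ((j + 1 : ℕ) : ℝ) + 1 := hj ▸ Nat.lt_floor_add_one _
  have hjN : j + 1 ≤ N :=
    hj ▸ Nat.floor_le_of_le ((div_le_iff₀ hδ).2 (by rw [hpt] at hx; linarith))
  rw [le_div_iff₀ hδ] at hj_le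
  rw [div_lt_iff₀ hδ] at hj_lt
  push_cast at hj_le hj_lt
  have hxj : gridPt m δ (j + 1) ≤ x := by rw [hpt]; push_cast; linarith
  calc h (x - 2 * δ) - h m ≤ h (gridPt m δ j) - h m := by
        gcongr; exact hmono (by rw [hpt]; linarith)
    _ ≤ gridApprox h m δ (j + 1) x := by
        rw [gridApprox_succ_eq hδ j hxj]
        linarith [mul_nonneg (gridSlope_nonneg (m := m) hδ hmono j) (sub_nonneg.2 hxj)]
    _ ≤ gridApprox h m δ N x := gridApprox_mono hδ hconv hmono x hjN

end Grid

def gridApproxSeq (h : ℝ → ℝ) (n : ℕ) : ℝ → ℝ :=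
  gridApprox h (-n) (1 / (n + 1)) (2 * n * (n + 1))

lemma tendsto_gridApproxSeq {h : ℝ → ℝ} (hconv : ConvexOn ℝ univ h) (hmono : Monotone h)
    (hlim : Tendsto h atBot (𝓝 0)) (x : ℝ) :
    Tendsto (gridApproxSeq h · x) atTop (𝓝 (h x)) := by
  have hcont : Continuous h := continuousOn_univ.1 (hconv.continuousOn isOpen_univ)
  have hδ (n : ℕ) : (0 : ℝ) < 1 / (n + 1) := by positivity
  have hshift : Tendsto (fun n : ℕ => x - 2 * (1 / ((n : ℝ) + 1))) atTop (𝓝 (x - 2 * 0)) :=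
    tendsto_const_nhds.sub ((tendsto_one_div_add_atTop_nhds_zero_nat (𝕜 := ℝ)).const_mul 2)
  rw [mul_zero, sub_zero] at hshift
  have hlower : Tendsto (fun n : ℕ => h (x - 2 * (1 / (n + 1))) - h (-n)) atTop (𝓝 (h x - 0)) :=
    ((hcont.tendsto x).comp hshift).sub
      (hlim.comp (tendsto_neg_atTop_atBot.comp tendsto_natCast_atTop_atTop))
  rw [sub_zero] at hlower
  refine tendsto_of_tendsto_of_tendsto_of_le_of_le' hlower tendsto_const_nhds ?_
    (Eventually.of_forall fun n =>
      gridApprox_le (hδ n) hconv hmono (hmono.le_of_tendsto hlim) _ x)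
  filter_upwards [tendsto_natCast_atTop_atTop.eventually_ge_atTop x] with n hn
  refine le_gridApprox (N := 2 * n * (n + 1)) (hδ n) hconv hmono ?_
  rw [gridPt]; push_cast; field_simp; linarith

lemma convexOn_ramp (k : ℝ) : ConvexOn ℝ univ (fun x : ℝ => max (x - k) 0) :=
  ((convexOn_id convex_univ).sub (concaveOn_const k convex_univ)).sup
    (convexOn_const 0 convex_univ)

lemma MemM.integrable_ramp {η : Measure ℝ} (hη : MemM η) (k : ℝ) :
    Integrable (fun x : ℝ => max (x - k) 0) η :=
  haveI := hη.1
  (hη.2.sub (integrable_const k)).pos_part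

section RampSums

variable {μ ν : Measure ℝ} {ι : Type*}

lemma MemM.integrable_sum_ramp (hη : MemM μ) (s : Finset ι) (w k : ι → ℝ) :
    Integrable (fun x => ∑ i ∈ s, w i * max (x - k i) 0) μ :=
  integrable_finsetSum _ fun i _ => (hη.integrable_ramp (k i)).const_mul (w i)

lemma integral_sum_ramp_le_of_Cpot_le (hμ : MemM μ) (hν : MemM ν)
    (hC : ∀ k, Cpot μ k ≤ Cpot ν k) (s : Finset ι) {w : ι → ℝ} (hw : ∀ i ∈ s, 0 ≤ w i)
    (k : ι → ℝ) :
    ∫ x, ∑ i ∈ s, w i * max (x - k i) 0 ∂μ ≤ ∫ x, ∑ i ∈ s, w i * max (x - k i) 0 ∂ν := by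
  rw [integral_finsetSum _ fun i _ => (hμ.integrable_ramp (k i)).const_mul (w i),
    integral_finsetSum _ fun i _ => (hν.integrable_ramp (k i)).const_mul (w i)]
  refine Finset.sum_le_sum fun i hi => ?_
  rw [integral_const_mul, integral_const_mul]
  exact mul_le_mul_of_nonneg_left (hC (k i)) (hw i hi)

end RampSums

theorem integral_le_integral_of_Cpot_le {μ ν : Measure ℝ} (hμ : MemM μ) (hν : MemM ν)
    (hC : ∀ k, Cpot μ k ≤ Cpot ν k) {h : ℝ → ℝ} (hconv : ConvexOn ℝ univ h) (hmono : Monotone h)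
    (hlim : Tendsto h atBot (𝓝 0)) (hμh : Integrable h μ) (hνh : Integrable h ν) :
    ∫ x, h x ∂μ ≤ ∫ x, h x ∂ν := by
  have hδ (n : ℕ) : (0 : ℝ) < 1 / (n + 1) := by positivity
  have htendsto {η : Measure ℝ} (hη : MemM η) (hηh : Integrable h η) :
      Tendsto (fun n => ∫ x, gridApproxSeq h n x ∂η) atTop (𝓝 (∫ x, h x ∂η)) :=
    tendsto_integral_of_dominated_convergence h
      (fun _ => (hη.integrable_sum_ramp (Finset.range _) (gridWeight h _ _)
        fun i => gridPt _ _ (i + 1)).aestronglyMeasurable) hηh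
      (fun n => ae_of_all _ fun x =>
        (abs_of_nonneg (gridApprox_nonneg (hδ n) hconv hmono _ x)).trans_le
          (gridApprox_le (hδ n) hconv hmono (hmono.le_of_tendsto hlim) _ x))
      (ae_of_all _ (tendsto_gridApproxSeq hconv hmono hlim))
  exact le_of_tendsto_of_tendsto' (htendsto hμ hμh) (htendsto hν hνh) fun n =>
    integral_sum_ramp_le_of_Cpot_le hμ hν hC (Finset.range _)
      (fun i _ => gridWeight_nonneg (hδ n) hconv hmono i) fun i => gridPt _ _ (i + 1)

/-- Lemma 3.6: under `μ ≤_pcd ν`, `μ ≤_pc ν` holds if and only if `C_μ ≤ C_ν`. -/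
theorem lePC_iff_Cpot_le
    (μ ν : MeasureTheory.Measure ℝ) (hμ : MemM μ) (hν : MemM ν)
    (hpcd : LePCD μ ν) :
    LePC μ ν ↔ ∀ k : ℝ, Cpot μ k ≤ Cpot ν k := by
  refine ⟨fun hpc k => hpc _ (fun x => le_max_right _ _) (convexOn_ramp k)
    (hμ.integrable_ramp k) (hν.integrable_ramp k), fun hC f hf0 hf hfμ hfν => ?_⟩
  obtain ⟨g, h, rfl, hg0, hgf, hg, hganti, hh, hhmono, hhlim⟩ :=
    hf.exists_antitone_add_monotone hf0
  have hg_int {η : Measure ℝ} (hη : Integrable (g + h) η) : Integrable g η :=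
    hη.mono' (continuousOn_univ.1 (hg.continuousOn isOpen_univ)).aestronglyMeasurable
      (ae_of_all _ fun x => (abs_of_nonneg (hg0 x)).trans_le (hgf x))
  have hh_int {η : Measure ℝ} (hη : Integrable (g + h) η) : Integrable h η := by
    simpa using hη.sub (hg_int hη)
  simp only [Pi.add_apply]
  rw [integral_add (hg_int hfμ) (hh_int hfμ), integral_add (hg_int hfν) (hh_int hfν)]
  exact add_le_add (hpcd g hg0 hg hganti (hg_int hfμ) (hg_int hfν))
    (integral_le_integral_of_Cpot_le hμ hν hC hh hhmono hhlim (hh_int hfμ) (hh_int hfν))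
end
end

section
/- Let μ, ν be Borel probability measures on ℝ with finite first moments and μ ≤_cd ν. Then the function c : [0,1] → ℝ, defined by c(u) = sup_{k∈ℝ} (C_{μ_u}(k) − C_ν(k)) for u ∈ (0,1), c(0) = 0 and c(1) = sup_{k∈ℝ} (C_μ(k) − C_ν(k)), is non-decreasing and continuous on [0,1]. -/
open MeasureTheory Set Filter

noncomputable section

/-!
Write `φ_u(k) = C_{μ_u}(k) - C_ν(k)`, so that `c = sup_k φ_·(k)`. Since `u ↦ μ_u` is
increasing for the setwise order, `c` is non-decreasing. For `u ≤ v` the increment `μ_v - μ_u`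
is a sub-measure of `μ` of mass `v - u`; by uniform integrability of `|x|` under `μ`,
`φ_v(k) - φ_u(k)` is then small uniformly in `k` bounded below. Hence each `φ_·(k)` is continuous
and `c` is lower semicontinuous. For upper semicontinuity at `w < 1`, the bound
`φ_v(k) ≤ ∫ |x| dμ + ∫ |x| dν + k (1 - v)` for `k ≤ 0` shows that near `w` only `k` bounded
below matter; at `w = 1` it follows from monotonicity.
-/

open ProbabilityTheory Function Topology

section Quantile

variable {μ : Measure ℝ}

lemma leftLim_cdf_nonneg (x : ℝ) : 0 ≤ leftLim (cdf μ) x :=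
  (cdf_nonneg μ (x - 1)).trans ((monotone_cdf μ).le_leftLim (by linarith))

variable [IsProbabilityMeasure μ] {u : ℝ}

lemma quantile_eq_sSup_cdf_lt (u : ℝ) : quantile μ u = sSup {k | cdf μ k < u} := by
  simp_rw [quantile, cdf_eq_real, measureReal_def]

lemma cdf_lt_of_lt_quantile (hu : 0 < u) {y : ℝ} (hy : y < quantile μ u) : cdf μ y < u := by
  rw [quantile_eq_sSup_cdf_lt] at hy
  have hne : {k | cdf μ k < u}.Nonempty :=
    ((tendsto_cdf_atBot μ).eventually (eventually_lt_nhds hu)).exists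
  obtain ⟨k, hk, hyk⟩ := exists_lt_of_lt_csSup hne hy
  exact (monotone_cdf μ hyk.le).trans_lt hk

lemma le_cdf_of_quantile_lt (hu : u < 1) {y : ℝ} (hy : quantile μ u < y) : u ≤ cdf μ y := by
  rw [quantile_eq_sSup_cdf_lt] at hy
  by_contra! hyu
  obtain ⟨K, hK⟩ := ((tendsto_cdf_atTop μ).eventually (eventually_gt_nhds hu)).exists
  exact hy.not_ge (le_csSup ⟨K, fun k hk => ((monotone_cdf μ).reflect_lt (hk.trans hK)).le⟩ hyu)

lemma le_cdf_quantile (hu : u < 1) : u ≤ cdf μ (quantile μ u) :=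
  ge_of_tendsto (((cdf μ).right_continuous _).tendsto.mono_left
    (nhdsWithin_mono _ Ioi_subset_Ici_self))
    (eventually_nhdsWithin_of_forall fun _ hy => le_cdf_of_quantile_lt hu hy)

lemma leftLim_cdf_quantile_le (hu : 0 < u) : leftLim (cdf μ) (quantile μ u) ≤ u :=
  le_of_tendsto ((monotone_cdf μ).tendsto_leftLim _)
    (eventually_nhdsWithin_of_forall fun _ hy => (cdf_lt_of_lt_quantile hu hy).le)

lemma quantile_mono {v : ℝ} (hu : 0 < u) (huv : u ≤ v) (hv : v < 1) :
    quantile μ u ≤ quantile μ v := by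
  by_contra! h
  obtain ⟨y, hvy, hyu⟩ := exists_between h
  linarith [cdf_lt_of_lt_quantile hu hyu, le_cdf_of_quantile_lt hv hvy]

lemma measure_Iio_eq_ofReal_leftLim_cdf (x : ℝ) :
    μ (Iio x) = ENNReal.ofReal (leftLim (cdf μ) x) := by
  conv_lhs => rw [← measure_cdf μ]
  rw [StieltjesFunction.measure_Iio _ (tendsto_cdf_atBot μ), sub_zero]

lemma measure_singleton_eq_ofReal_cdf_sub_leftLim (x : ℝ) :
    μ {x} = ENNReal.ofReal (cdf μ x - leftLim (cdf μ) x) := by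
  conv_lhs => rw [← measure_cdf μ]
  exact StieltjesFunction.measure_singleton _ _

end Quantile

section MuU

variable {μ : Measure ℝ} {u v : ℝ}

lemma muU_of_nonpos (hu : u ≤ 0) : muU μ u = 0 := if_pos hu

lemma muU_of_one_le (hu : 1 ≤ u) : muU μ u = μ := by
  rw [muU, if_neg (by linarith), if_pos hu]

variable [IsProbabilityMeasure μ]

lemma muU_of_mem_Ioo (hu : u ∈ Ioo 0 1) :
    muU μ u = μ.restrict (Iio (quantile μ u)) +
      ENNReal.ofReal (u - leftLim (cdf μ) (quantile μ u)) • Measure.dirac (quantile μ u) := by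
  rw [muU, if_neg hu.1.not_ge, if_neg hu.2.not_ge, measure_Iio_eq_ofReal_leftLim_cdf,
    ENNReal.toReal_ofReal (leftLim_cdf_nonneg _)]

lemma muU_le_restrict_Iic (hu : u ∈ Ioo 0 1) : muU μ u ≤ μ.restrict (Iic (quantile μ u)) := by
  rw [muU_of_mem_Ioo hu, ← Iio_union_right,
    Measure.restrict_union (by simp) (measurableSet_singleton _), Measure.restrict_singleton,
    measure_singleton_eq_ofReal_cdf_sub_leftLim]
  gcongr
  exact le_cdf_quantile hu.2

lemma muU_le_self (u : ℝ) : muU μ u ≤ μ := by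
  rcases le_or_gt u 0 with hu0 | hu0
  · rw [muU_of_nonpos hu0]; exact Measure.zero_le μ
  rcases le_or_gt 1 u with hu1 | hu1
  · rw [muU_of_one_le hu1]
  · exact (muU_le_restrict_Iic ⟨hu0, hu1⟩).trans Measure.restrict_le_self

lemma muU_mono : Monotone (muU μ) := by
  intro u v huv
  rcases le_or_gt u 0 with hu0 | hu0
  · rw [muU_of_nonpos hu0]; exact Measure.zero_le _
  rcases le_or_gt 1 v with hv1 | hv1
  · rw [muU_of_one_le hv1]; exact muU_le_self u
  have hu : u ∈ Ioo 0 1 := ⟨hu0, huv.trans_lt hv1⟩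
  have hv : v ∈ Ioo 0 1 := ⟨hu0.trans_le huv, hv1⟩
  rcases (quantile_mono (μ := μ) hu0 huv hv1).eq_or_lt with heq | hlt
  · rw [muU_of_mem_Ioo hu, muU_of_mem_Ioo hv, heq]
    gcongr
  · calc muU μ u ≤ μ.restrict (Iic (quantile μ u)) := muU_le_restrict_Iic hu
      _ ≤ μ.restrict (Iio (quantile μ v)) :=
          Measure.restrict_mono (Iic_subset_Iio.2 hlt) le_rfl
      _ ≤ muU μ v := by rw [muU_of_mem_Ioo hv]; exact Measure.le_add_right le_rfl

lemma muU_apply_univ (hu : u ∈ Icc 0 1) : muU μ u univ = ENNReal.ofReal u := by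
  rcases hu.1.eq_or_lt with rfl | hu0
  · simp [muU_of_nonpos le_rfl]
  rcases hu.2.eq_or_lt with rfl | hu1
  · simp [muU_of_one_le le_rfl]
  have hG := leftLim_cdf_quantile_le (μ := μ) hu0
  simp only [muU_of_mem_Ioo ⟨hu0, hu1⟩, Measure.add_apply, Measure.smul_apply,
    Measure.restrict_apply MeasurableSet.univ, univ_inter, measure_univ, smul_eq_mul, mul_one,
    measure_Iio_eq_ofReal_leftLim_cdf]
  rw [← ENNReal.ofReal_add (leftLim_cdf_nonneg _) (by linarith), add_sub_cancel]

lemma measureReal_muU_univ (hu : u ∈ Icc 0 1) : (muU μ u).real univ = u := by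
  rw [measureReal_def, muU_apply_univ hu, ENNReal.toReal_ofReal hu.1]

end MuU

lemma tendsto_integral_max_sub_atTop {α : Type*} [MeasurableSpace α] {μ : Measure α}
    {f : α → ℝ} (hf : Integrable f μ) :
    Tendsto (fun R => ∫ x, max (f x - R) 0 ∂μ) atTop (𝓝 0) := by
  have h := tendsto_integral_filter_of_dominated_convergence (μ := μ)
    (F := fun R x => max (f x - R) 0) (f := fun _ => 0) (l := atTop) (fun x => |f x|)
    (Eventually.of_forall fun R => by fun_prop)
    ?_ hf.abs ?_
  · simpa using h
  · filter_upwards [eventually_ge_atTop 0] with R hR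
    filter_upwards with x
    rw [Real.norm_eq_abs, abs_of_nonneg (le_max_right _ _)]
    exact max_le (by linarith [le_abs_self (f x)]) (abs_nonneg _)
  · filter_upwards with x
    refine tendsto_const_nhds.congr' ?_
    filter_upwards [eventually_ge_atTop (f x)] with R hR
    rw [max_eq_right (by linarith)]

section Potential

variable {μ ν η χ : Measure ℝ}

lemma cpot_nonneg (η : Measure ℝ) (k : ℝ) : 0 ≤ Cpot η k :=
  integral_nonneg fun _ => le_max_right _ _

lemma tendsto_cpot_atTop (hη : Integrable (fun x : ℝ => x) η) :
    Tendsto (Cpot η) atTop (𝓝 0) :=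
  tendsto_integral_max_sub_atTop hη

lemma integrable_max_sub [IsFiniteMeasure η] (hη : Integrable (fun x : ℝ => x) η) (k : ℝ) :
    Integrable (fun x => max (x - k) 0) η :=
  (hη.sub (integrable_const k)).pos_part

lemma integral_sub_le_cpot [IsProbabilityMeasure ν] (hν : Integrable (fun x : ℝ => x) ν)
    (k : ℝ) : ∫ x, x ∂ν - k ≤ Cpot ν k := by
  calc ∫ x, x ∂ν - k = ∫ x, (x - k) ∂ν := by
        rw [integral_sub hν (integrable_const k), integral_const, probReal_univ, one_smul]
    _ ≤ Cpot ν k := integral_mono (hν.sub (integrable_const k)) (integrable_max_sub hν k)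
        fun x => le_max_left _ _

lemma cpot_le_add_integral_tail [IsFiniteMeasure μ] (hμ : Integrable (fun x : ℝ => x) μ)
    (hη : η ≤ μ) (k R : ℝ) :
    Cpot η k ≤ (R + max (-k) 0) * η.real univ + ∫ x, max (|x| - R) 0 ∂μ := by
  have : IsFiniteMeasure η := isFiniteMeasure_of_le μ hη
  have htail : Integrable (fun x => max (|x| - R) 0) μ :=
    (hμ.abs.sub (integrable_const R)).pos_part
  calc Cpot η k ≤ ∫ x, ((R + max (-k) 0) + max (|x| - R) 0) ∂η := by
        refine integral_mono (integrable_max_sub (hμ.mono_measure hη) k)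
          ((integrable_const _).add (htail.mono_measure hη)) fun x => ?_
        have := le_abs_self x
        have := le_max_left (|x| - R) 0
        exact max_le (by linarith [le_max_left (-k) 0])
          (by linarith [le_max_right (-k) 0, abs_nonneg x])
    _ = (R + max (-k) 0) * η.real univ + ∫ x, max (|x| - R) 0 ∂η := by
        rw [integral_add (integrable_const _) (htail.mono_measure hη), integral_const,
          smul_eq_mul, mul_comm]
    _ ≤ (R + max (-k) 0) * η.real univ + ∫ x, max (|x| - R) 0 ∂μ := by
        grw [integral_mono_measure hη
          (Eventually.of_forall fun x : ℝ => le_max_right (|x| - R) 0) htail]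

lemma cpot_le_cpot_of_le [IsFiniteMeasure μ] (hμ : Integrable (fun x : ℝ => x) μ)
    (hηχ : η ≤ χ) (hχ : χ ≤ μ) (k : ℝ) : Cpot η k ≤ Cpot χ k :=
  have : IsFiniteMeasure χ := isFiniteMeasure_of_le μ hχ
  integral_mono_measure hηχ (Eventually.of_forall fun _ => le_max_right _ _)
    (integrable_max_sub (hμ.mono_measure hχ) k)

lemma cpot_sub_cpot_le [IsFiniteMeasure μ] (hμ : Integrable (fun x : ℝ => x) μ)
    (hηχ : η ≤ χ) (hχ : χ ≤ μ) (k R : ℝ) :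
    Cpot χ k - Cpot η k ≤
      (R + max (-k) 0) * (χ.real univ - η.real univ) + ∫ x, max (|x| - R) 0 ∂μ := by
  have : IsFiniteMeasure χ := isFiniteMeasure_of_le μ hχ
  have : IsFiniteMeasure η := isFiniteMeasure_of_le χ hηχ
  have hθ : χ - η ≤ μ := Measure.sub_le.trans hχ
  have hsplit : Cpot χ k = Cpot (χ - η) k + Cpot η k := by
    conv_lhs => rw [← Measure.sub_add_cancel_of_le hηχ]
    exact integral_add_measure (integrable_max_sub (hμ.mono_measure hθ) k)
      (integrable_max_sub (hμ.mono_measure (hηχ.trans hχ)) k)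
  have hmass : (χ - η).real univ = χ.real univ - η.real univ := by
    rw [measureReal_def, Measure.sub_apply MeasurableSet.univ hηχ,
      ENNReal.toReal_sub_of_le (hηχ univ) (measure_ne_top χ univ), measureReal_def,
      measureReal_def]
  rw [hsplit, add_sub_cancel_right, ← hmass]
  exact cpot_le_add_integral_tail hμ hθ k R

end Potential

def supCpotDiff (μ ν : Measure ℝ) (u : ℝ) : ℝ :=
  ⨆ k, Cpot (muU μ u) k - Cpot ν k

lemma supCpotDiff_zero {μ ν : Measure ℝ} (hν : Integrable (fun x : ℝ => x) ν) :
    supCpotDiff μ ν 0 = 0 := by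
  have hbdd : BddAbove (range fun k => -Cpot ν k) :=
    ⟨0, forall_mem_range.2 fun k => neg_nonpos.2 (cpot_nonneg ν k)⟩
  have hC0 (k : ℝ) : Cpot (muU μ 0) k = 0 := by
    rw [muU_of_nonpos le_rfl, Cpot, integral_zero_measure]
  have htend : Tendsto (fun k => -Cpot ν k) atTop (𝓝 0) := by
    simpa using (tendsto_cpot_atTop hν).neg
  simp only [supCpotDiff, hC0, zero_sub]
  exact le_antisymm (ciSup_le fun k => neg_nonpos.2 (cpot_nonneg ν k))
    (le_of_tendsto' htend (le_ciSup hbdd))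

section SupCpotDiff

variable {μ ν : Measure ℝ} [IsProbabilityMeasure μ] [IsProbabilityMeasure ν]

lemma cpot_muU_sub_cpot_le (hμ : Integrable (fun x : ℝ => x) μ)
    (hν : Integrable (fun x : ℝ => x) ν)
    {v : ℝ} (hv : v ∈ Icc 0 1) (k : ℝ) :
    Cpot (muU μ v) k - Cpot ν k ≤ ∫ x, |x| ∂μ + ∫ x, |x| ∂ν + min k 0 * (1 - v) := by
  have hμv : Cpot (muU μ v) k ≤ max (-k) 0 * v + ∫ x, |x| ∂μ := by
    have h := cpot_le_add_integral_tail hμ (muU_le_self v) k 0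
    simpa [measureReal_muU_univ hv, abs_nonneg] using h
  have hmean : -∫ x, |x| ∂ν ≤ ∫ x, x ∂ν :=
    neg_le_of_neg_le ((neg_le_abs _).trans (abs_integral_le_integral_abs))
  have := integral_sub_le_cpot hν k
  have := cpot_nonneg ν k
  have : 0 ≤ ∫ x, |x| ∂ν := integral_nonneg fun x => abs_nonneg x
  rcases le_total k 0 with hk | hk
  · rw [min_eq_left hk, max_eq_left (neg_nonneg.2 hk)] at *
    linarith
  · rw [min_eq_right hk, max_eq_right (neg_nonpos.2 hk)] at *
    linarith

lemma bddAbove_range_cpot_muU_sub (hμ : Integrable (fun x : ℝ => x) μ)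
    (hν : Integrable (fun x : ℝ => x) ν)
    (u : ℝ) :
    BddAbove (range fun k => Cpot (muU μ u) k - Cpot ν k) := by
  refine ⟨∫ x, |x| ∂μ + ∫ x, |x| ∂ν, forall_mem_range.2 fun k => ?_⟩
  have h := cpot_muU_sub_cpot_le hμ hν (v := 1) ⟨zero_le_one, le_rfl⟩ k
  rw [muU_of_one_le le_rfl, sub_self, mul_zero, add_zero] at h
  exact (sub_le_sub_right (cpot_le_cpot_of_le hμ (muU_le_self u) le_rfl k) _).trans h

lemma cpot_muU_sub_le_supCpotDiff (hμ : Integrable (fun x : ℝ => x) μ)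
    (hν : Integrable (fun x : ℝ => x) ν)
    (u k : ℝ) :
    Cpot (muU μ u) k - Cpot ν k ≤ supCpotDiff μ ν u :=
  le_ciSup (bddAbove_range_cpot_muU_sub hμ hν u) k

lemma cpot_muU_sub_cpot_muU_le (hμ : Integrable (fun x : ℝ => x) μ) {u v : ℝ} (hu : 0 ≤ u)
    (huv : u ≤ v) (hv : v ≤ 1) (k R : ℝ) :
    Cpot (muU μ v) k - Cpot (muU μ u) k ≤
      (R + max (-k) 0) * (v - u) + ∫ x, max (|x| - R) 0 ∂μ := by
  have h := cpot_sub_cpot_le hμ (muU_mono huv) (muU_le_self v) k R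
  rwa [measureReal_muU_univ ⟨hu.trans huv, hv⟩, measureReal_muU_univ ⟨hu, huv.trans hv⟩] at h

lemma monotone_supCpotDiff (hμ : Integrable (fun x : ℝ => x) μ)
    (hν : Integrable (fun x : ℝ => x) ν) :
    Monotone (supCpotDiff μ ν) := fun _ v huv =>
  ciSup_mono (bddAbove_range_cpot_muU_sub hμ hν v) fun k =>
    sub_le_sub_right (cpot_le_cpot_of_le hμ (muU_mono huv) (muU_le_self v) k) _

lemma supCpotDiff_le_add (hμ : Integrable (fun x : ℝ => x) μ)
    (hν : Integrable (fun x : ℝ => x) ν)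
    {u v K R : ℝ} (hu : 0 ≤ u) (huv : u ≤ v) (hv : v ≤ 1) (hK : K ≤ 0)
    (hKv : ∫ x, |x| ∂μ + ∫ x, |x| ∂ν + K * (1 - v) ≤ 0) (hR : 0 ≤ R) :
    supCpotDiff μ ν v ≤ supCpotDiff μ ν u + (R - K) * (v - u) + ∫ x, max (|x| - R) 0 ∂μ := by
  have hcu : 0 ≤ supCpotDiff μ ν u := supCpotDiff_zero hν ▸ monotone_supCpotDiff hμ hν hu
  have htail : 0 ≤ ∫ x, max (|x| - R) 0 ∂μ := integral_nonneg fun _ => le_max_right _ _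
  refine ciSup_le fun k => ?_
  rcases le_total k K with hk | hk
  · calc Cpot (muU μ v) k - Cpot ν k ≤ ∫ x, |x| ∂μ + ∫ x, |x| ∂ν + min k 0 * (1 - v) :=
          cpot_muU_sub_cpot_le hμ hν ⟨hu.trans huv, hv⟩ k
      _ ≤ ∫ x, |x| ∂μ + ∫ x, |x| ∂ν + K * (1 - v) := by
          rw [min_eq_left (hk.trans hK)]
          gcongr
      _ ≤ supCpotDiff μ ν u + (R - K) * (v - u) + ∫ x, max (|x| - R) 0 ∂μ := by
          have := mul_nonneg (sub_nonneg.2 (hK.trans hR)) (sub_nonneg.2 huv)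
          linarith
  · have hslope : (R + max (-k) 0) * (v - u) ≤ (R - K) * (v - u) := by
      gcongr
      linarith [max_le (neg_le_neg hk) (neg_nonneg.2 hK)]
    linarith [cpot_muU_sub_cpot_muU_le hμ hu huv hv k R, cpot_muU_sub_le_supCpotDiff hμ hν u k]

lemma lowerSemicontinuousOn_supCpotDiff (hμ : Integrable (fun x : ℝ => x) μ)
    (hν : Integrable (fun x : ℝ => x) ν) :
    LowerSemicontinuousOn (supCpotDiff μ ν) (Icc 0 1) := by
  intro w hw a ha
  obtain ⟨k, hk⟩ := exists_lt_of_lt_ciSup ha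
  obtain ⟨R, hR⟩ := ((tendsto_integral_max_sub_atTop hμ.abs).eventually
    (gt_mem_nhds (sub_pos.2 hk))).exists
  have hL : Continuous fun t => Cpot (muU μ w) k - Cpot ν k -
      (R + max (-k) 0) * max (w - t) 0 - ∫ x, max (|x| - R) 0 ∂μ := by
    fun_prop
  have haL : a < Cpot (muU μ w) k - Cpot ν k -
      (R + max (-k) 0) * max (w - w) 0 - ∫ x, max (|x| - R) 0 ∂μ := by
    rw [sub_self, max_self, mul_zero, sub_zero]
    linarith
  filter_upwards [self_mem_nhdsWithin,
    ((hL.tendsto w).eventually (lt_mem_nhds haL)).filter_mono nhdsWithin_le_nhds] with t ht hLt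
  refine hLt.trans_le ((le_of_sub_nonneg ?_).trans (cpot_muU_sub_le_supCpotDiff hμ hν t k))
  rcases le_total t w with htw | hwt
  · rw [max_eq_left (sub_nonneg.2 htw)]
    linarith [cpot_muU_sub_cpot_muU_le hμ ht.1 htw hw.2 k R]
  · rw [max_eq_right (sub_nonpos.2 hwt), mul_zero, sub_zero]
    linarith [cpot_le_cpot_of_le hμ (muU_mono hwt) (muU_le_self t) k,
      (integral_nonneg fun _ => le_max_right _ _ : 0 ≤ ∫ x, max (|x| - R) 0 ∂μ)]

lemma upperSemicontinuousOn_supCpotDiff (hμ : Integrable (fun x : ℝ => x) μ)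
    (hν : Integrable (fun x : ℝ => x) ν) :
    UpperSemicontinuousOn (supCpotDiff μ ν) (Icc 0 1) := by
  intro w hw b hb
  rcases hw.2.eq_or_lt with rfl | hw1
  · exact eventually_nhdsWithin_of_forall fun t ht =>
      (monotone_supCpotDiff hμ hν ht.2).trans_lt hb
  set M := ∫ x, |x| ∂μ + ∫ x, |x| ∂ν
  have hM : 0 ≤ M := add_nonneg (integral_nonneg fun x => abs_nonneg x)
    (integral_nonneg fun x => abs_nonneg x)
  -- for `t ≤ (1 + w) / 2` and `k ≤ K` this makes `φ_t(k) ≤ 0`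
  set K := -(2 * M / (1 - w))
  have hK : K ≤ 0 := neg_nonpos.2 (div_nonneg (by positivity) (by linarith))
  have hKw : K * ((1 - w) / 2) = -M := by
    simp only [K]
    field_simp
  obtain ⟨R, hR0, hR⟩ := ((eventually_ge_atTop 0).and
    ((tendsto_integral_max_sub_atTop hμ.abs).eventually (gt_mem_nhds (sub_pos.2 hb)))).exists
  have hU : Continuous fun t => supCpotDiff μ ν w + (R - K) * max (t - w) 0 +
      ∫ x, max (|x| - R) 0 ∂μ := by
    fun_prop
  have hUb : supCpotDiff μ ν w + (R - K) * max (w - w) 0 + ∫ x, max (|x| - R) 0 ∂μ < b := by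
    rw [sub_self, max_self, mul_zero, add_zero]
    linarith
  filter_upwards [self_mem_nhdsWithin,
    ((hU.tendsto w).eventually (gt_mem_nhds hUb)).filter_mono nhdsWithin_le_nhds,
    mem_nhdsWithin_of_mem_nhds (Iio_mem_nhds (by linarith : w < (1 + w) / 2))]
    with t ht hUt htw
  refine lt_of_le_of_lt ?_ hUt
  rcases le_total t w with htw' | hwt
  · rw [max_eq_right (sub_nonpos.2 htw'), mul_zero, add_zero]
    exact (monotone_supCpotDiff hμ hν htw').trans
      (le_add_of_nonneg_right (integral_nonneg fun _ => le_max_right _ _))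
  · rw [max_eq_left (sub_nonneg.2 hwt)]
    refine supCpotDiff_le_add hμ hν hw.1 hwt ht.2 hK ?_ hR0
    have : K * (1 - t) ≤ K * ((1 - w) / 2) :=
      mul_le_mul_of_nonpos_left (by linarith [mem_Iio.1 htw]) hK
    linarith

lemma continuousOn_supCpotDiff (hμ : Integrable (fun x : ℝ => x) μ)
    (hν : Integrable (fun x : ℝ => x) ν) :
    ContinuousOn (supCpotDiff μ ν) (Icc 0 1) := fun w hw =>
  continuousWithinAt_iff_lower_upperSemicontinuousWithinAt.2
    ⟨lowerSemicontinuousOn_supCpotDiff hμ hν w hw,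
      upperSemicontinuousOn_supCpotDiff hμ hν w hw⟩

end SupCpotDiff

theorem c_monotone_continuous_general
    (μ ν : MeasureTheory.Measure ℝ)
    [MeasureTheory.IsProbabilityMeasure μ] [MeasureTheory.IsProbabilityMeasure ν]
    (hμ : MeasureTheory.Integrable (fun x : ℝ => x) μ)
    (hν : MeasureTheory.Integrable (fun x : ℝ => x) ν)
    (c : ℝ → ℝ)
    (hc0 : c 0 = 0)
    (hc1 : c 1 = ⨆ k : ℝ, (Cpot μ k - Cpot ν k))
    (hcu : ∀ u ∈ Set.Ioo (0:ℝ) 1, c u = ⨆ k : ℝ, (Cpot (muU μ u) k - Cpot ν k)) :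
    MonotoneOn c (Set.Icc (0:ℝ) 1) ∧ ContinuousOn c (Set.Icc (0:ℝ) 1) := by
  have hc : EqOn c (supCpotDiff μ ν) (Icc 0 1) := by
    rintro u ⟨hu0, hu1⟩
    rcases hu0.eq_or_lt with rfl | hu0
    · rw [hc0, supCpotDiff_zero hν]
    rcases hu1.eq_or_lt with rfl | hu1
    · rw [hc1, supCpotDiff, muU_of_one_le le_rfl]
    · exact hcu u ⟨hu0, hu1⟩
  exact ⟨((monotone_supCpotDiff hμ hν).monotoneOn _).congr hc.symm,
    (continuousOn_supCpotDiff hμ hν).congr hc⟩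

/-- Lemma 4.1: the function `c(u) = sup_k (C_{μ_u}(k) - C_ν(k))` is
non-decreasing and continuous on `[0,1]`. -/
theorem c_monotone_continuous
    (μ ν : MeasureTheory.Measure ℝ)
    [MeasureTheory.IsProbabilityMeasure μ] [MeasureTheory.IsProbabilityMeasure ν]
    (hμ : MeasureTheory.Integrable (fun x : ℝ => x) μ)
    (hν : MeasureTheory.Integrable (fun x : ℝ => x) ν)
    (hcd : LeCD μ ν)
    (c : ℝ → ℝ)
    (hc0 : c 0 = 0)
    (hc1 : c 1 = ⨆ k : ℝ, (Cpot μ k - Cpot ν k))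
    (hcu : ∀ u ∈ Set.Ioo (0:ℝ) 1, c u = ⨆ k : ℝ, (Cpot (muU μ u) k - Cpot ν k)) :
    MonotoneOn c (Set.Icc (0:ℝ) 1) ∧ ContinuousOn c (Set.Icc (0:ℝ) 1) :=
  c_monotone_continuous_general μ ν hμ hν c hc0 hc1 hcu
end
end
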